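/- arXiv:2102.00986 — 8 statements merged into one kernel-verified Lean document; each statement's English description precedes it below -/
import Mathlib

section
/- Let {C_1,...,C_r} be an almost equitable partition of a weighted undirected graph with Laplacian L and characteristic matrix Π. Then the image of Π is L-invariant, i.e., L·im(Π) ⊆ im(Π). -/
open Matrix

/-- For an almost equitable partition of a weighted undirected graph, the image of the
characteristic matrix `Π` is invariant under the graph Laplacian `L`. -/
theorem aep_image_invariant {n r : ℕ}
    (W L : Matrix (Fin n) (Fin n) ℝ)
    (hsymm : W.IsSymm)
    (hnonneg : ∀ i j, 0 ≤ W i j)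
    (hdiag : ∀ i, W i i = 0)
    (hL : ∀ i j, L i j = if i = j then ∑ k, W i k else - W i j)
    (C : Fin r → Finset (Fin n))
    (hne : ∀ j, (C j).Nonempty)
    (hdisj : ∀ j k, j ≠ k → Disjoint (C j) (C k))
    (hcover : ∀ i : Fin n, ∃ j, i ∈ C j)
    (Pi : Matrix (Fin n) (Fin r) ℝ)
    (hPi : ∀ i j, Pi i j = if i ∈ C j then 1 else 0)
    (haep : ∀ μ ν : Fin r, μ ≠ ν → ∀ i ∈ C μ, ∀ j ∈ C μ,
      ∑ k ∈ C ν, W i k = ∑ k ∈ C ν, W j k) :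
    ∀ v : Fin r → ℝ, ∃ u : Fin r → ℝ,
      L.mulVec (Pi.mulVec v) = Pi.mulVec u := by
  classical
  intro v
  choose c hcmem using hcover
  have huniq : ∀ i μ, i ∈ C μ → μ = c i := by
    intro i μ h
    by_contra hne'
    exact (Finset.disjoint_left.mp (hdisj μ (c i) hne')) h (hcmem i)
  set rep : Fin r → Fin n := fun μ => (hne μ).choose with hrep
  have hrepmem : ∀ μ, rep μ ∈ C μ := fun μ => (hne μ).choose_spec
  refine ⟨fun μ => ∑ ν, (∑ k ∈ C ν, W (rep μ) k) * (v μ - v ν), ?_⟩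
  have hPiv : ∀ (u' : Fin r → ℝ) (j : Fin n), Pi.mulVec u' j = u' (c j) := by
    intro u' j
    simp only [mulVec, dotProduct, hPi]
    rw [Finset.sum_eq_single (c j)]
    · simp [hcmem j]
    · intro b _ hb
      rw [if_neg, zero_mul]
      exact fun hmem => hb (huniq j b hmem)
    · simp
  funext i
  rw [hPiv]
  have huniv : (Finset.univ : Finset (Fin n)) = Finset.univ.biUnion C := by
    ext x
    simp only [Finset.mem_biUnion, Finset.mem_univ, true_and, true_iff]
    exact ⟨c x, hcmem x⟩
  have hLHS : L.mulVec (Pi.mulVec v) i = ∑ j, W i j * (v (c i) - v (c j)) := by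
    have h1 : Pi.mulVec v = fun j => v (c j) := funext (hPiv v)
    rw [h1]
    simp only [mulVec, dotProduct, hL]
    have hterm : ∀ j : Fin n,
        (if i = j then ∑ k, W i k else - W i j) * v (c j)
          = (if i = j then (∑ k, W i k) * v (c i) else 0) - W i j * v (c j) := by
      intro j
      by_cases h : i = j
      · subst h
        simp [hdiag i]
      · simp [h]
    rw [Finset.sum_congr rfl (fun j _ => hterm j), Finset.sum_sub_distrib,
      Finset.sum_ite_eq Finset.univ i (fun _ => (∑ k, W i k) * v (c i))]
    simp only [Finset.mem_univ, if_true, Finset.sum_mul, mul_sub]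
    rw [Finset.sum_sub_distrib]
  rw [hLHS, huniv, Finset.sum_biUnion]
  · refine Finset.sum_congr rfl ?_
    intro ν _
    have hck : ∀ k ∈ C ν, c k = ν := fun k hk => (huniq k ν hk).symm
    rw [Finset.sum_congr rfl (fun k hk => by rw [hck k hk]), ← Finset.sum_mul]
    by_cases hv : ν = c i
    · subst hv
      simp
    · rw [haep (c i) ν (fun h => hv h.symm) i (hcmem i) (rep (c i)) (hrepmem (c i))]
  · exact fun μ _ ν _ h => hdisj μ ν h
end

section
/- Conversely, if Π is the characteristic matrix of a partition of the vertices of a weighted undirected graph such that im(Π) is invariant under the graph Laplacian L, then the partition is almost equitable. -/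
open Matrix

/-- Conversely, if the image of the characteristic matrix `Π` of a partition is invariant
under the graph Laplacian `L`, then the partition is almost equitable. -/
theorem image_invariant_implies_aep {n r : ℕ}
    (W L : Matrix (Fin n) (Fin n) ℝ)
    (hsymm : W.IsSymm)
    (hnonneg : ∀ i j, 0 ≤ W i j)
    (hdiag : ∀ i, W i i = 0)
    (hL : ∀ i j, L i j = if i = j then ∑ k, W i k else - W i j)
    (C : Fin r → Finset (Fin n))
    (hne : ∀ j, (C j).Nonempty)
    (hdisj : ∀ j k, j ≠ k → Disjoint (C j) (C k))
    (hcover : ∀ i : Fin n, ∃ j, i ∈ C j)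
    (Pi : Matrix (Fin n) (Fin r) ℝ)
    (hPi : ∀ i j, Pi i j = if i ∈ C j then 1 else 0)
    (hinv : ∀ v : Fin r → ℝ, ∃ u : Fin r → ℝ,
      L.mulVec (Pi.mulVec v) = Pi.mulVec u) :
    ∀ μ ν : Fin r, μ ≠ ν → ∀ i ∈ C μ, ∀ j ∈ C μ,
      ∑ k ∈ C ν, W i k = ∑ k ∈ C ν, W j k := by
  intro μ ν hμν i hi j hj
  obtain ⟨u, hu⟩ := hinv (fun k => if k = ν then (1:ℝ) else 0)
  have hv : Pi.mulVec (fun k => if k = ν then (1:ℝ) else 0)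
      = fun k => if k ∈ C ν then (1:ℝ) else 0 := by
    funext k
    simp [mulVec, dotProduct, hPi, mul_ite]
  have key : ∀ x : Fin n, x ∈ C μ →
      - ∑ k ∈ C ν, W x k = u μ := by
    intro x hx
    have hxν : x ∉ C ν := fun h =>
      (Finset.disjoint_left.mp (hdisj μ ν hμν)) hx h
    have h1 := congrFun hu x
    rw [hv] at h1
    have lhs : L.mulVec (fun k => if k ∈ C ν then (1:ℝ) else 0) x
        = - ∑ k ∈ C ν, W x k := by
      simp only [mulVec, dotProduct, mul_ite, mul_one, mul_zero]
      rw [Finset.sum_ite_mem, Finset.univ_inter, ← Finset.sum_neg_distrib]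
      refine Finset.sum_congr rfl fun k hk => ?_
      have hxk : x ≠ k := fun h => hxν (h ▸ hk)
      rw [hL, if_neg hxk]
    have rhs : Pi.mulVec u x = u μ := by
      simp only [mulVec, dotProduct, hPi, ite_mul, one_mul, zero_mul]
      rw [Finset.sum_eq_single μ]
      · simp [hx]
      · intro b _ hb
        have : x ∉ C b := fun hxb =>
          (Finset.disjoint_left.mp (hdisj b μ hb)) hxb hx
        simp [this]
      · simp
    rw [lhs, rhs] at h1
    exact h1
  have := (key i hi).trans (key j hj).symm
  linarith
end

section
/- Let A be semistable with J = lim_{t→∞} e^{At}, and suppose P̃ is any symmetric solution of A P̃ + P̃ Aᵀ + (I−J)BBᵀ(I−Jᵀ) = 0. Then the pseudo controllability Gramian 𝒫 = ∫₀^∞ (e^{At}−J)BBᵀ(e^{Aᵀt}−Jᵀ) dt is finite and equals P̃ − J P̃ Jᵀ. -/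
/-!
Passing to the limit in `e^{sA} e^{tA} = e^{(s+t)A}` gives `e^{sA} J = J`. With it, the Lyapunov
equation turns the derivative of `P̃ - e^{tA} P̃ e^{tAᵀ}` into the integrand
`(e^{tA} - J) B Bᵀ (e^{tA} - J)ᵀ`, while the function itself tends to `P̃ - J P̃ Jᵀ`. The integrand
is a Gram matrix: its diagonal entries are nonnegative derivatives of a convergent function, hence
integrable on `(0, ∞)`, and they dominate the off-diagonal entries.
-/

open Matrix Filter NormedSpace MeasureTheory

theorem Matrix.exp_smul_mul_eq_of_tendsto {m : Type*} [Fintype m] [DecidableEq m]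
    {A J : Matrix m m ℝ} (hlim : Tendsto (fun t : ℝ => exp (t • A)) atTop (nhds J)) (t : ℝ) :
    exp (t • A) * J = J := by
  have hshift : Tendsto (fun s : ℝ => exp (t • A) * exp (s • A)) atTop (nhds J) := by
    refine (hlim.comp (tendsto_atTop_add_const_left atTop t tendsto_id)).congr fun s => ?_
    rw [Function.comp_apply, id, add_smul]
    exact exp_add_of_commute _ _ (((Commute.refl A).smul_left t).smul_right s)
  exact tendsto_nhds_unique (hlim.const_mul _) hshift

theorem hasDerivAt_exp_smul_mul_mul_exp_smul {𝕂 𝔸 : Type*} [RCLike 𝕂] [NormedRing 𝔸]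
    [NormedAlgebra 𝕂 𝔸] [CompleteSpace 𝔸] (A P A' : 𝔸) (t : 𝕂) :
    HasDerivAt (fun s : 𝕂 => exp (s • A) * P * exp (s • A'))
      (exp (t • A) * (A * P + P * A') * exp (t • A')) t := by
  refine (((hasDerivAt_exp_smul_const A t).mul_const P).mul
    (hasDerivAt_exp_smul_const' A' t)).congr_deriv ?_
  simp only [mul_add, add_mul, mul_assoc]

theorem Matrix.mul_mul_transpose_mul_transpose {l m k R : Type*} [Fintype m] [Fintype k]
    [CommSemiring R] (M : Matrix l m R) (B : Matrix m k R) :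
    M * B * Bᵀ * Mᵀ = M * B * (M * B)ᵀ := by
  rw [transpose_mul, Matrix.mul_assoc]

theorem Matrix.mul_transpose_apply_self_nonneg {m k : Type*} [Fintype k] (C : Matrix m k ℝ)
    (i : m) : 0 ≤ (C * Cᵀ) i i :=
  Finset.sum_nonneg fun _ _ => mul_self_nonneg _

theorem Matrix.abs_mul_transpose_apply_le {m k : Type*} [Fintype k] (C : Matrix m k ℝ)
    (i j : m) : |(C * Cᵀ) i j| ≤ ((C * Cᵀ) i i + (C * Cᵀ) j j) / 2 := by
  simp only [mul_apply, transpose_apply]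
  calc |∑ l, C i l * C j l| ≤ ∑ l, |C i l| * |C j l| := by
        simpa only [abs_mul] using Finset.abs_sum_le_sum_abs (fun l => C i l * C j l) .univ
    _ ≤ ∑ l, (C i l * C i l + C j l * C j l) / 2 := Finset.sum_le_sum fun l _ => by
        nlinarith [two_mul_le_add_sq |C i l| |C j l|, sq_abs (C i l), sq_abs (C j l)]
    _ = _ := by rw [← Finset.sum_div, Finset.sum_add_distrib]

theorem integrable_mul_transpose_apply {α m k : Type*} [MeasurableSpace α] {μ : Measure α}
    [Fintype k] {C : α → Matrix m k ℝ} (hC : ∀ i l, Measurable fun x => C x i l)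
    (hdiag : ∀ i, Integrable (fun x => (C x * (C x)ᵀ) i i) μ) (i j : m) :
    Integrable (fun x => (C x * (C x)ᵀ) i j) μ := by
  have hmeas : Measurable fun x => (C x * (C x)ᵀ) i j := by
    simp only [mul_apply, transpose_apply]
    exact Finset.measurable_sum _ fun l _ => (hC i l).mul (hC j l)
  refine (((hdiag i).add (hdiag j)).div_const 2).mono' hmeas.aestronglyMeasurable ?_
  exact ae_of_all _ fun x => (C x).abs_mul_transpose_apply_le i j

theorem Matrix.mul_lyapunov_mul_transpose_eq_neg {m k R : Type*} [Fintype m] [DecidableEq m]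
    [Fintype k] [CommRing R] {M J A P : Matrix m m R} {B : Matrix m k R} (hMJ : M * J = J)
    (hP : A * P + P * Aᵀ + (1 - J) * B * Bᵀ * (1 - Jᵀ) = 0) :
    M * (A * P + P * Aᵀ) * Mᵀ = -((M - J) * B * Bᵀ * (M - J)ᵀ) := by
  rw [← transpose_one, ← transpose_sub, transpose_one] at hP
  have hMJ' : M * (1 - J) = M - J := by rw [mul_sub, mul_one, hMJ]
  rw [eq_neg_of_add_eq_zero_left hP, ← hMJ']
  simp only [transpose_mul, mul_neg, neg_mul, Matrix.mul_assoc]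

section

-- Matrices carry no global norm; the operator norm makes them a Banach algebra.
attribute [local instance] Matrix.linftyOpNormedRing Matrix.linftyOpNormedAlgebra

theorem HasDerivAt.matrix_apply {m : Type*} [Fintype m] [DecidableEq m]
    {f : ℝ → Matrix m m ℝ} {f' : Matrix m m ℝ} {t : ℝ} (h : HasDerivAt f f' t) (i j : m) :
    HasDerivAt (fun s => f s i j) (f' i j) t :=
  (entryLinearMap ℝ ℝ i j).toContinuousLinearMap.hasFDerivAt.comp_hasDerivAt t h

theorem Matrix.continuous_exp_smul {m : Type*} [Fintype m] [DecidableEq m] (A : Matrix m m ℝ) :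
    Continuous fun t : ℝ => exp (t • A) :=
  continuous_iff_continuousAt.2 fun t => (hasDerivAt_exp_smul_const A t).continuousAt

theorem Matrix.hasDerivAt_sub_exp_smul_mul_mul_transpose_apply {m k : Type*} [Fintype m]
    [DecidableEq m] [Fintype k] {A J P : Matrix m m ℝ} {B : Matrix m k ℝ}
    (hJ : ∀ t : ℝ, exp (t • A) * J = J)
    (hP : A * P + P * Aᵀ + (1 - J) * B * Bᵀ * (1 - Jᵀ) = 0) (t : ℝ) (i j : m) :
    HasDerivAt (fun s : ℝ => (P - exp (s • A) * P * (exp (s • A))ᵀ) i j)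
      (((exp (t • A) - J) * B * Bᵀ * (exp (t • A) - J)ᵀ) i j) t := by
  have htr : ∀ s : ℝ, exp (s • Aᵀ) = (exp (s • A))ᵀ := fun s => by
    rw [← transpose_smul, exp_transpose]
  have h := ((hasDerivAt_exp_smul_mul_mul_exp_smul A P Aᵀ t).const_sub P).matrix_apply i j
  -- `rfl` bridges the default matrix instances and the operator-norm ones.
  convert h using 1
  · exact funext fun s => by rw [← htr]; rfl
  · rw [← neg_neg ((exp (t • A) - J) * B * Bᵀ * (exp (t • A) - J)ᵀ),
      ← mul_lyapunov_mul_transpose_eq_neg (hJ t) hP, ← htr]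
    rfl

end

theorem pseudo_gramian_eq_general {n p : ℕ}
    (A J : Matrix (Fin n) (Fin n) ℝ) (B : Matrix (Fin n) (Fin p) ℝ)
    (hlim : Tendsto (fun t : ℝ => exp (t • A)) atTop (nhds J))
    (Pt : Matrix (Fin n) (Fin n) ℝ)
    (hPlyap : A * Pt + Pt * Aᵀ + (1 - J) * B * Bᵀ * (1 - Jᵀ) = 0) :
    (∀ i j, IntegrableOn
        (fun t : ℝ => ((exp (t • A) - J) * B * Bᵀ * (exp (t • A) - J)ᵀ) i j)
        (Set.Ioi 0)) ∧
    (∀ i j, (∫ t in Set.Ioi (0 : ℝ),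
        ((exp (t • A) - J) * B * Bᵀ * (exp (t • A) - J)ᵀ) i j)
      = (Pt - J * Pt * Jᵀ) i j) := by
  have hderiv := hasDerivAt_sub_exp_smul_mul_mul_transpose_apply
    (exp_smul_mul_eq_of_tendsto hlim) hPlyap
  have hlimit : ∀ i j, Tendsto (fun t : ℝ => (Pt - exp (t • A) * Pt * (exp (t • A))ᵀ) i j)
      atTop (nhds ((Pt - J * Pt * Jᵀ) i j)) := fun i j =>
    (((continuous_const.sub ((continuous_id.matrix_mul continuous_const).matrix_mul
      continuous_id.matrix_transpose)).matrix_elem i j).tendsto J).comp hlim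
  simp only [mul_mul_transpose_mul_transpose] at hderiv ⊢
  have hdiag : ∀ i, IntegrableOn
      (fun t : ℝ => ((exp (t • A) - J) * B * ((exp (t • A) - J) * B)ᵀ) i i) (Set.Ioi 0) :=
    fun i => integrableOn_Ioi_deriv_of_nonneg' (fun t _ => hderiv t i i)
      (fun t _ => mul_transpose_apply_self_nonneg _ i) (hlimit i i)
  have hint := integrable_mul_transpose_apply (fun i l =>
    (((continuous_exp_smul A).sub continuous_const).matrix_mul continuous_const).matrix_elem
      i l |>.measurable) hdiag
  refine ⟨hint, fun i j => ?_⟩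
  rw [integral_Ioi_of_hasDerivAt_of_tendsto' (fun t _ => hderiv t i j) (hint i j) (hlimit i j)]
  simp

/-- For a semistable matrix `A` with limit `J = lim e^{At}`, and any symmetric solution `P̃`
of the Lyapunov equation `A P̃ + P̃ Aᵀ + (I−J)BBᵀ(I−Jᵀ) = 0`, the pseudo controllability
Gramian `𝒫 = ∫₀^∞ (e^{At}−J)BBᵀ(e^{Aᵀt}−Jᵀ) dt` is finite (entrywise integrable) and
equals `P̃ − J P̃ Jᵀ`. -/
theorem pseudo_gramian_eq {n p : ℕ}
    (A J : Matrix (Fin n) (Fin n) ℝ) (B : Matrix (Fin n) (Fin p) ℝ)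
    (hlim : Tendsto (fun t : ℝ => exp (t • A)) atTop (nhds J))
    (Pt : Matrix (Fin n) (Fin n) ℝ)
    (hPsym : Ptᵀ = Pt)
    (hPlyap : A * Pt + Pt * Aᵀ + (1 - J) * B * Bᵀ * (1 - Jᵀ) = 0) :
    (∀ i j, IntegrableOn
        (fun t : ℝ => ((exp (t • A) - J) * B * Bᵀ * (exp (t • A) - J)ᵀ) i j)
        (Set.Ioi 0)) ∧
    (∀ i j, (∫ t in Set.Ioi (0 : ℝ),
        ((exp (t • A) - J) * B * Bᵀ * (exp (t • A) - J)ᵀ) i j)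
      = (Pt - J * Pt * Jᵀ) i j) :=
  pseudo_gramian_eq_general A J B hlim Pt hPlyap
end

section
/- Let (A,B,C) be a semistable system with J = lim_{t→∞} e^{At}. The transfer function G(s) = C(sI−A)^{-1}B belongs to ℋ₂ if and only if CJB = 0; and in that case ‖G‖²_{ℋ₂} = Tr(C𝒫Cᵀ) = Tr(Bᵀ𝒬B), where 𝒫 and 𝒬 are the pseudo controllability and observability Gramians. -/
/-!
Because `e^{(s+t)A} = e^{sA} e^{tA}` and `e^{tA} → J`, the limit absorbs the semigroup:
`e^{tA} J = J e^{tA} = J = J²`. Hence `F(t) = e^{tA} - J` is again a semigroup, and since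
`F(t) → 0`, some `‖F(T)‖ ≤ e⁻¹`, which by submultiplicativity forces exponential decay of `F`.
If `CJB = 0` the impulse response is `C F(t) B`, so its square is integrable and, by cyclicity
of the trace, its integral is the trace of either pseudo Gramian against `CᵀC` or `BBᵀ`.
Otherwise `‖C e^{tA} B‖²` tends to `‖CJB‖² > 0`, which is not integrable at infinity.
-/

open Matrix Filter NormedSpace MeasureTheory Set Asymptotics Topology

section OneParameterSemigroup

variable {R : Type*} [Ring R] [TopologicalSpace R] [IsTopologicalRing R] [T2Space R]
  {f : ℝ → R} {J : R}

theorem mul_limit_eq_limit (hf : ∀ s t, f (s + t) = f s * f t) (hJ : Tendsto f atTop (𝓝 J))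
    (t : ℝ) : f t * J = J := by
  refine tendsto_nhds_unique (hJ.const_mul (f t)) ?_
  exact (hJ.comp (tendsto_atTop_add_const_left atTop t tendsto_id)).congr fun s => hf t s

theorem limit_mul_eq_limit (hf : ∀ s t, f (s + t) = f s * f t) (hJ : Tendsto f atTop (𝓝 J))
    (t : ℝ) : J * f t = J := by
  refine tendsto_nhds_unique (hJ.mul_const (f t)) ?_
  exact (hJ.comp (tendsto_atTop_add_const_right atTop t tendsto_id)).congr fun s => hf s t

theorem limit_mul_self (hf : ∀ s t, f (s + t) = f s * f t) (hJ : Tendsto f atTop (𝓝 J)) :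
    J * J = J :=
  tendsto_nhds_unique (hJ.mul_const J)
    (by simp only [mul_limit_eq_limit hf hJ, tendsto_const_nhds])

theorem sub_limit_mul_sub_limit (hf : ∀ s t, f (s + t) = f s * f t) (hJ : Tendsto f atTop (𝓝 J))
    (s t : ℝ) : (f s - J) * (f t - J) = f (s + t) - J := by
  rw [sub_mul, mul_sub, mul_sub, mul_limit_eq_limit hf hJ, limit_mul_eq_limit hf hJ,
    limit_mul_self hf hJ, hf]
  abel

end OneParameterSemigroup

theorem exists_isBigO_exp_neg_of_tendsto_zero {R : Type*} [NormedRing R] {f : ℝ → R}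
    (hcont : ContinuousOn f (Ici 0)) (hmul : ∀ s ≥ 0, ∀ t ≥ 0, f (s + t) = f s * f t)
    (hf : Tendsto f atTop (𝓝 0)) : ∃ ε > 0, f =O[atTop] fun t => Real.exp (-ε * t) := by
  obtain ⟨T, hT0, hT⟩ : ∃ T > 0, ‖f T‖ ≤ Real.exp (-1) :=
    ((eventually_gt_atTop 0).and ((tendsto_zero_iff_norm_tendsto_zero.1 hf).eventually
      (ge_mem_nhds (Real.exp_pos _)))).exists
  obtain ⟨M, hM⟩ := (isCompact_Icc (a := 0) (b := T)).exists_bound_of_continuousOn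
    (hcont.mono Icc_subset_Ici_self)
  have hM0 : 0 ≤ M := (norm_nonneg _).trans (hM 0 (left_mem_Icc.2 hT0.le))
  have hbase : ∀ t ∈ Icc 0 T, ‖f t‖ ≤ M * Real.exp (1 - t / T) := fun t ht =>
    (hM t ht).trans <| le_mul_of_one_le_right hM0 <| Real.one_le_exp <|
      sub_nonneg.2 <| (div_le_one hT0).2 ht.2
  -- peeling off one factor `f T`, of norm `≤ e⁻¹`, shifts `t` by `T`
  have hbound : ∀ k : ℕ, ∀ t ∈ Icc 0 (k * T), ‖f t‖ ≤ M * Real.exp (1 - t / T) := by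
    intro k
    induction k with
    | zero =>
      exact fun t ht => hbase t ⟨ht.1, ht.2.trans (by rw [Nat.cast_zero, zero_mul]; exact hT0.le)⟩
    | succ k ih =>
      rintro t ⟨ht0, htk⟩
      rcases le_or_gt t T with htT | htT
      · exact hbase t ⟨ht0, htT⟩
      calc ‖f t‖ = ‖f T * f (t - T)‖ := by rw [← hmul T hT0.le _ (by linarith), add_sub_cancel]
        _ ≤ ‖f T‖ * ‖f (t - T)‖ := norm_mul_le _ _
        _ ≤ Real.exp (-1) * (M * Real.exp (1 - (t - T) / T)) :=
          mul_le_mul hT (ih _ ⟨by linarith, by push_cast at htk; linarith⟩) (norm_nonneg _)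
            (Real.exp_pos _).le
        _ = M * Real.exp (1 - t / T) := by
          rw [mul_left_comm, ← Real.exp_add]
          congr 2
          field_simp
          ring
  refine ⟨T⁻¹, inv_pos.2 hT0, IsBigO.of_bound (M * Real.exp 1) ?_⟩
  filter_upwards [eventually_ge_atTop 0] with t ht
  obtain ⟨k, hk⟩ := exists_nat_ge (t / T)
  calc ‖f t‖ ≤ M * Real.exp (1 - t / T) := hbound k t ⟨ht, (div_le_iff₀ hT0).1 hk⟩
    _ = M * Real.exp 1 * ‖Real.exp (-T⁻¹ * t)‖ := by
      rw [Real.norm_eq_abs, Real.abs_exp, mul_assoc, ← Real.exp_add]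
      ring_nf

theorem eq_zero_of_integrableOn_Ioi_of_tendsto {E : Type*} [NormedAddCommGroup E] {f : ℝ → E}
    {a : ℝ} {l : E} (hf : IntegrableOn f (Ioi a)) (hl : Tendsto f atTop (𝓝 l)) : l = 0 := by
  refine IntegrableAtFilter.eq_zero_of_tendsto ⟨Ioi a, Ioi_mem_atTop a, hf⟩ (fun s hs => ?_) hl
  obtain ⟨b, hb⟩ := mem_atTop_sets.1 hs
  rw [← top_le_iff, ← Real.volume_Ici (a := b)]
  exact measure_mono hb

-- The Frobenius norm is submultiplicative, invariant under transposition and dominates entries.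
section Frobenius

open scoped Matrix.Norms.Frobenius

theorem Matrix.norm_entry_le_frobenius_norm {m n α : Type*} [Fintype m] [Fintype n]
    [SeminormedAddCommGroup α] (A : Matrix m n α) (i : m) (j : n) : ‖A i j‖ ≤ ‖A‖ :=
  (PiLp.norm_apply_le (WithLp.toLp 2 (A i)) j).trans
    (PiLp.norm_apply_le (WithLp.toLp 2 fun i => WithLp.toLp 2 (A i)) i)

variable {ι : Type*} [Fintype ι] [DecidableEq ι]

theorem integrableOn_Ioi_mul_mul_apply {u v : ℝ → Matrix ι ι ℝ} {a ε : ℝ} (hε : 0 < ε)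
    (hu : ContinuousOn u (Ici a)) (hv : ContinuousOn v (Ici a))
    (hu' : u =O[atTop] fun t => Real.exp (-ε * t)) (hv' : v =O[atTop] fun t => Real.exp (-ε * t))
    (M : Matrix ι ι ℝ) (i j : ι) : IntegrableOn (fun t => (u t * M * v t) i j) (Ioi a) := by
  refine integrable_of_isBigO_exp_neg (mul_pos two_pos hε) (by fun_prop) ?_
  have h : (fun t => u t * M * v t) =O[atTop]
      fun t => Real.exp (-ε * t) * 1 * Real.exp (-ε * t) :=
    (hu'.mul (isBigO_const_const M one_ne_zero atTop)).mul hv'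
  refine (isBigO_of_le _ fun t => norm_entry_le_frobenius_norm _ i j).trans
    (h.congr_right fun t => ?_)
  rw [mul_one, ← Real.exp_add]
  ring_nf

end Frobenius

section TraceIntegral

variable {α ι 𝕜 : Type*} [MeasurableSpace α] {μ : Measure α} [Fintype ι] [RCLike 𝕜]
  {X : α → Matrix ι ι 𝕜}

theorem integrable_trace_mul (W : Matrix ι ι 𝕜) (hX : ∀ i j, Integrable (fun t => X t i j) μ) :
    Integrable (fun t => trace (W * X t)) μ := by
  simp only [trace, diag, mul_apply]
  exact integrable_finsetSum _ fun i _ => integrable_finsetSum _ fun k _ => (hX k i).const_mul _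

theorem integral_trace_mul (W : Matrix ι ι 𝕜) (hX : ∀ i j, Integrable (fun t => X t i j) μ)
    {N : Matrix ι ι 𝕜} (hN : ∀ i j, N i j = ∫ t, X t i j ∂μ) :
    ∫ t, trace (W * X t) ∂μ = trace (W * N) := by
  simp only [trace, diag, mul_apply, hN]
  rw [integral_finsetSum]
  · refine Finset.sum_congr rfl fun i _ => ?_
    rw [integral_finsetSum _ fun k _ => (hX k i).const_mul _]
    simp only [integral_const_mul]
  · exact fun i _ => integrable_finsetSum _ fun k _ => (hX k i).const_mul _

end TraceIntegral

section TraceGram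

variable {m n p R : Type*} [Fintype m] [Fintype n] [Fintype p] [CommRing R]

theorem trace_mul_mul_mul_transpose_eq_left (C : Matrix m n R) (X : Matrix n n R)
    (B : Matrix n p R) :
    trace (C * X * B * (C * X * B)ᵀ) = trace (Cᵀ * C * (X * B * Bᵀ * Xᵀ)) := by
  simp only [transpose_mul, ← Matrix.mul_assoc]
  rw [trace_mul_comm]
  simp only [Matrix.mul_assoc]

theorem trace_mul_mul_mul_transpose_eq_right (C : Matrix m n R) (X : Matrix n n R)
    (B : Matrix n p R) :
    trace (C * X * B * (C * X * B)ᵀ) = trace (B * Bᵀ * (Xᵀ * Cᵀ * C * X)) := by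
  rw [trace_mul_comm]
  simp only [transpose_mul, ← Matrix.mul_assoc]
  rw [trace_mul_comm]
  simp only [Matrix.mul_assoc]

theorem trace_mul_transpose_self_eq_zero_iff {A : Matrix m n ℝ} :
    trace (A * Aᵀ) = 0 ↔ A = 0 := by
  simpa only [conjTranspose_eq_transpose_of_trivial] using
    trace_mul_conjTranspose_self_eq_zero_iff (A := A)

end TraceGram

section Semistable

open scoped Matrix.Norms.Frobenius

variable {ι : Type*} [Fintype ι] [DecidableEq ι] {A J : Matrix ι ι ℝ}

theorem Matrix.exp_add_smul (A : Matrix ι ι ℝ) (s t : ℝ) :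
    exp ((s + t) • A) = exp (s • A) * exp (t • A) := by
  rw [add_smul]
  exact exp_add_of_commute _ _ (((Commute.refl A).smul_left s).smul_right t)

theorem exists_isBigO_exp_smul_sub_limit
    (hlim : Tendsto (fun t : ℝ => exp (t • A)) atTop (𝓝 J)) :
    ∃ ε > 0, (fun t : ℝ => exp (t • A) - J) =O[atTop] fun t => Real.exp (-ε * t) :=
  exists_isBigO_exp_neg_of_tendsto_zero (by fun_prop)
    (fun s _ t _ => (sub_limit_mul_sub_limit (exp_add_smul A) hlim s t).symm)
    (tendsto_sub_nhds_zero_iff.2 hlim)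

theorem integrableOn_Ioi_exp_smul_sub_limit_mul_mul_transpose_apply
    (hlim : Tendsto (fun t : ℝ => exp (t • A)) atTop (𝓝 J)) (M : Matrix ι ι ℝ) (i j : ι) :
    IntegrableOn (fun t : ℝ => ((exp (t • A) - J) * M * (exp (t • A) - J)ᵀ) i j) (Ioi 0) := by
  obtain ⟨ε, hε, hF⟩ := exists_isBigO_exp_smul_sub_limit hlim
  exact integrableOn_Ioi_mul_mul_apply hε (by fun_prop) (by fun_prop) hF
    ((isBigO_of_le _ fun t => (frobenius_norm_transpose _).le).trans hF) M i j

theorem integrableOn_Ioi_transpose_exp_smul_sub_limit_mul_mul_apply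
    (hlim : Tendsto (fun t : ℝ => exp (t • A)) atTop (𝓝 J)) (M : Matrix ι ι ℝ) (i j : ι) :
    IntegrableOn (fun t : ℝ => ((exp (t • A) - J)ᵀ * M * (exp (t • A) - J)) i j) (Ioi 0) := by
  obtain ⟨ε, hε, hF⟩ := exists_isBigO_exp_smul_sub_limit hlim
  exact integrableOn_Ioi_mul_mul_apply hε (by fun_prop) (by fun_prop)
    ((isBigO_of_le _ fun t => (frobenius_norm_transpose _).le).trans hF) hF M i j

end Semistable

/-- For a semistable system `(A,B,C)` with `J = lim e^{At}`, the transfer function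
`G(s) = C(sI−A)⁻¹B` is in `ℋ₂` (i.e. the impulse response `t ↦ C e^{At} B` is
square-integrable on `[0,∞)`) iff `CJB = 0`, and in that case
`‖G‖²_{ℋ₂} = Tr(C 𝒫 Cᵀ) = Tr(Bᵀ 𝒬 B)` with `𝒫, 𝒬` the pseudo Gramians. -/
theorem semistable_H2_norm {n p q : ℕ}
    (A J : Matrix (Fin n) (Fin n) ℝ)
    (B : Matrix (Fin n) (Fin p) ℝ) (C : Matrix (Fin q) (Fin n) ℝ)
    (hlim : Tendsto (fun t : ℝ => NormedSpace.exp (t • A)) atTop (nhds J))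
    (P Q : Matrix (Fin n) (Fin n) ℝ)
    (hP : ∀ i j, P i j = ∫ t in Set.Ioi (0 : ℝ),
        ((NormedSpace.exp (t • A) - J) * B * Bᵀ * (NormedSpace.exp (t • A) - J)ᵀ) i j)
    (hQ : ∀ i j, Q i j = ∫ t in Set.Ioi (0 : ℝ),
        ((NormedSpace.exp (t • A) - J)ᵀ * Cᵀ * C * (NormedSpace.exp (t • A) - J)) i j) :
    ((IntegrableOn
        (fun t : ℝ => Matrix.trace (C * NormedSpace.exp (t • A) * B * (C * NormedSpace.exp (t • A) * B)ᵀ))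
        (Set.Ioi 0)) ↔ C * J * B = 0) ∧
    (C * J * B = 0 →
      (∫ t in Set.Ioi (0 : ℝ),
          Matrix.trace (C * NormedSpace.exp (t • A) * B * (C * NormedSpace.exp (t • A) * B)ᵀ))
        = Matrix.trace (C * P * Cᵀ) ∧
      (∫ t in Set.Ioi (0 : ℝ),
          Matrix.trace (C * NormedSpace.exp (t • A) * B * (C * NormedSpace.exp (t • A) * B)ᵀ))
        = Matrix.trace (Bᵀ * Q * B)) := by
  have hCFB (h : C * J * B = 0) (t : ℝ) : C * exp (t • A) * B = C * (exp (t • A) - J) * B := by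
    rw [Matrix.mul_sub, Matrix.sub_mul, h, sub_zero]
  have hIP : ∀ i j, IntegrableOn
      (fun t : ℝ => ((exp (t • A) - J) * B * Bᵀ * (exp (t • A) - J)ᵀ) i j) (Ioi 0) := by
    simpa only [Matrix.mul_assoc] using
      integrableOn_Ioi_exp_smul_sub_limit_mul_mul_transpose_apply hlim (B * Bᵀ)
  have hIQ : ∀ i j, IntegrableOn
      (fun t : ℝ => ((exp (t • A) - J)ᵀ * Cᵀ * C * (exp (t • A) - J)) i j) (Ioi 0) := by
    simpa only [Matrix.mul_assoc] using
      integrableOn_Ioi_transpose_exp_smul_sub_limit_mul_mul_apply hlim (Cᵀ * C)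
  refine ⟨⟨fun hint => ?_, fun h => ?_⟩, fun h => ⟨?_, ?_⟩⟩
  · have hcont : Continuous fun X : Matrix (Fin n) (Fin n) ℝ =>
        trace (C * X * B * (C * X * B)ᵀ) := by
      fun_prop
    exact trace_mul_transpose_self_eq_zero_iff.1
      (eq_zero_of_integrableOn_Ioi_of_tendsto hint ((hcont.tendsto J).comp hlim))
  · simp_rw [hCFB h, trace_mul_mul_mul_transpose_eq_left]
    exact integrable_trace_mul _ hIP
  · simp_rw [hCFB h, trace_mul_mul_mul_transpose_eq_left, integral_trace_mul _ hIP hP,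
      trace_mul_cycle C P]
  · simp_rw [hCFB h, trace_mul_mul_mul_transpose_eq_right, integral_trace_mul _ hIQ hQ,
      trace_mul_cycle Bᵀ Q]
end

section
/- Consider the single-integrator network Mẋ = −Lx + Fu, y = Hx, with M positive diagonal and L a connected undirected graph Laplacian, and its clustered reduction M̂ż = −L̂z + F̂u, ŷ = Ĥz with M̂ = ΠᵀMΠ, L̂ = ΠᵀLΠ, F̂ = ΠᵀF, Ĥ = HΠ for any partition characteristic matrix Π. Then the impulse responses satisfy lim_{t→∞} y(t) = lim_{t→∞} ŷ(t) = H𝟙_n𝟙_nᵀF / (𝟙_nᵀM𝟙_n). -/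
/-!
Let `ker L = span {v}` (here `v = 𝟙_n`). The semigroup `exp (-t M⁻¹ L)` is similar, via a
factor `M = Bᵀ B`, to `exp (-t A)` for the symmetric positive semidefinite `A = B⁻ᵀ L B⁻¹`.
Spectrally, `exp (-t A)` converges to the orthogonal projection onto `ker A = span {B v}`;
undoing the similarity, `exp (-t M⁻¹ L) M⁻¹` converges to `v vᵀ / (vᵀ M v)`.

The clustered system is the same kind of system for `(Πᵀ M Π, Πᵀ L Π)`: `Π` is injective and
maps `𝟙_r` to `𝟙_n`, so `Πᵀ M Π` is positive definite, `ker (Πᵀ L Π) = span {𝟙_r}`, and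
`Π 𝟙_r 𝟙_rᵀ Πᵀ = 𝟙_n 𝟙_nᵀ`, `𝟙_rᵀ Πᵀ M Π 𝟙_r = 𝟙_nᵀ M 𝟙_n`.
-/

open Matrix Filter NormedSpace Topology

-- `1 - a * a⁻¹` is the indicator of `{0}` because `0⁻¹ = 0`; through the functional calculus it
-- turns a symmetric matrix into the orthogonal projection onto its kernel.
lemma Real.tendsto_exp_neg_mul_atTop {a : ℝ} (ha : 0 ≤ a) :
    Tendsto (fun t : ℝ => Real.exp (-(t * a))) atTop (𝓝 (1 - a * a⁻¹)) := by
  rcases ha.eq_or_lt with rfl | ha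
  · simp
  · rw [mul_inv_cancel₀ ha.ne', sub_self]
    exact Real.tendsto_exp_atBot.comp
      (tendsto_neg_atTop_atBot.comp (tendsto_id.atTop_mul_const ha))

lemma Submodule.comap_span_singleton_of_injective {R M N : Type*} [Semiring R]
    [AddCommMonoid M] [AddCommMonoid N] [Module R M] [Module R N] {f : M →ₗ[R] N}
    (hf : Function.Injective f) (w : M) :
    (span R {f w}).comap f = span R {w} := by
  rw [← Set.image_singleton, ← map_span, comap_map_eq_of_injective hf]

lemma Filter.Tendsto.const_matrix_mul_mul_const {X ι κ l o R : Type*} [Fintype ι] [Fintype κ]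
    [TopologicalSpace R] [NonUnitalNonAssocSemiring R] [IsTopologicalSemiring R]
    {f : X → Matrix ι κ R} {F : Filter X} {A : Matrix ι κ R}
    (h : Tendsto f F (𝓝 A)) (G : Matrix l ι R) (K : Matrix κ o R) :
    Tendsto (fun x => G * f x * K) F (𝓝 (G * A * K)) :=
  (((continuous_const.matrix_mul continuous_id).matrix_mul continuous_const).tendsto _).comp h

namespace Matrix

variable {ι κ : Type*} [Fintype ι]

lemma mul_smul_vecMulVec_mul_transpose {R : Type*} [CommRing R] (G : Matrix κ ι R) (c : R)
    (w : ι → R) :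
    G * (c • vecMulVec w w) * Gᵀ = c • vecMulVec (G *ᵥ w) (G *ᵥ w) := by
  rw [Matrix.mul_smul, Matrix.smul_mul, mul_vecMulVec, vecMulVec_mul, vecMul_transpose]

lemma dotProduct_transpose_mul_mul_mulVec [Fintype κ] {R : Type*} [CommSemiring R]
    (L : Matrix ι ι R) (X : Matrix ι κ R) (x : κ → R) :
    x ⬝ᵥ (Xᵀ * L * X) *ᵥ x = X *ᵥ x ⬝ᵥ L *ᵥ X *ᵥ x := by
  rw [← mulVec_mulVec, ← mulVec_mulVec, dotProduct_mulVec x Xᵀ, vecMul_transpose]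

lemma PosSemidef.ker_transpose_mul_mul_same [Fintype κ] {L : Matrix ι ι ℝ} (hL : L.PosSemidef)
    (X : Matrix ι κ ℝ) :
    LinearMap.ker (Xᵀ * L * X).mulVecLin = (LinearMap.ker L.mulVecLin).comap X.mulVecLin := by
  ext x
  simp only [LinearMap.mem_ker, Submodule.mem_comap, mulVecLin_apply]
  refine ⟨fun h => ?_, fun h => by rw [← mulVec_mulVec, ← mulVec_mulVec, h, mulVec_zero]⟩
  rw [← hL.dotProduct_mulVec_zero_iff, star_trivial, ← dotProduct_transpose_mul_mul_mulVec, h,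
    dotProduct_zero]

lemma eq_inv_dotProduct_smul_vecMulVec_of_ker_eq_span {A P : Matrix ι ι ℝ} {v : ι → ℝ}
    (hker : LinearMap.ker A.mulVecLin = Submodule.span ℝ {v}) (hAP : A * P = 0)
    (hP : Pᵀ = P) (hPv : P *ᵥ v = v) :
    P = (v ⬝ᵥ v)⁻¹ • vecMulVec v v := by
  have hcol : ∀ j, ∃ c : ℝ, c • v = fun i => P i j := fun j => by
    rw [← Submodule.mem_span_singleton, ← hker, LinearMap.mem_ker, mulVecLin_apply]
    ext i
    simpa [mulVec, dotProduct, mul_apply] using congrFun₂ hAP i j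
  choose c hc using hcol
  have hPc : P = vecMulVec v c := by
    ext i j
    simp only [vecMulVec_apply, ← congrFun (hc j) i, Pi.smul_apply, smul_eq_mul, mul_comm]
  rcases eq_or_ne v 0 with rfl | hv
  · simp [hPc]
  have hvc : (v ⬝ᵥ v) • c = v := calc
    (v ⬝ᵥ v) • c = Pᵀ *ᵥ v := by
      rw [hPc, transpose_vecMulVec, vecMulVec_mulVec, op_smul_eq_smul]
    _ = v := by rw [hP, hPv]
  have hvv : v ⬝ᵥ v ≠ 0 := by simpa [dotProduct_self_eq_zero] using hv
  rw [hPc, (eq_inv_smul_iff₀ hvv).mpr hvc, vecMulVec_smul]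

section

variable [DecidableEq ι]

lemma transpose_cfc (f : ℝ → ℝ) (A : Matrix ι ι ℝ) : (cfc f A)ᵀ = cfc f A := by
  have : IsSelfAdjoint (cfc f A) := cfc_predicate f A
  rwa [IsSelfAdjoint, star_eq_conjTranspose, conjTranspose_eq_transpose_of_trivial] at this

lemma IsHermitian.exp_smul_neg_eq_cfc {A : Matrix ι ι ℝ} (hA : A.IsHermitian) (t : ℝ) :
    NormedSpace.exp (t • -A) = cfc (fun x => Real.exp (-(t * x))) A := by
  have hconj := exp_units_conj (Unitary.toUnits hA.eigenvectorUnitary)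
  simp only [Unitary.val_toUnits_apply, Unitary.val_inv_toUnits_apply, UnitaryGroup.inv_val]
    at hconj
  conv_lhs => rw [hA.spectral_theorem]
  rw [hA.cfc_eq, IsHermitian.cfc, ← map_neg, ← map_smul, Unitary.conjStarAlgAut_apply,
    Unitary.conjStarAlgAut_apply, hconj, diagonal_neg, ← diagonal_smul, exp_diagonal]
  congr
  ext k
  simp [Real.exp_eq_exp_ℝ]

lemma IsHermitian.tendsto_cfc_fun {A : Matrix ι ι ℝ} (hA : A.IsHermitian) {X : Type*}
    {l : Filter X} {F : X → ℝ → ℝ} {f : ℝ → ℝ}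
    (h : ∀ k, Tendsto (fun x => F x (hA.eigenvalues k)) l (𝓝 (f (hA.eigenvalues k)))) :
    Tendsto (fun x => cfc (F x) A) l (𝓝 (cfc f A)) := by
  simp only [hA.cfc_eq, IsHermitian.cfc, Unitary.conjStarAlgAut_apply]
  exact ((continuous_id.matrix_diagonal.tendsto _).comp (tendsto_pi_nhds.mpr h)
    ).const_matrix_mul_mul_const _ _

lemma IsHermitian.mul_cfc_one_sub_mul_inv {A : Matrix ι ι ℝ} (hA : A.IsHermitian) :
    A * cfc (fun x : ℝ => 1 - x * x⁻¹) A = 0 := by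
  have hs := A.finite_real_spectrum
  conv_lhs => enter [1]; rw [← cfc_id' ℝ A hA.isSelfAdjoint]
  rw [← cfc_mul _ _ A (hs.continuousOn _) (hs.continuousOn _)]
  have : (fun x : ℝ => x * (1 - x * x⁻¹)) = 0 := funext fun x => by
    rcases eq_or_ne x 0 with rfl | hx
    · simp
    · simp [hx]
  rw [this, cfc_zero]

lemma IsHermitian.cfc_one_sub_mul_inv_mulVec {A : Matrix ι ι ℝ} (hA : A.IsHermitian)
    {v : ι → ℝ} (hv : A *ᵥ v = 0) :
    cfc (fun x : ℝ => 1 - x * x⁻¹) A *ᵥ v = v := by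
  have hs := A.finite_real_spectrum
  have : cfc (fun x : ℝ => 1 - x * x⁻¹) A = 1 - cfc (fun x : ℝ => x⁻¹) A * A := by
    rw [cfc_sub _ _ A (hs.continuousOn _) (hs.continuousOn _), cfc_const_one ℝ A hA.isSelfAdjoint]
    conv_rhs => enter [2, 2]; rw [← cfc_id' ℝ A hA.isSelfAdjoint]
    rw [← cfc_mul _ _ A (hs.continuousOn _) (hs.continuousOn _)]
    simp only [mul_comm]
  rw [this, sub_mulVec, one_mulVec, ← mulVec_mulVec, hv, mulVec_zero, sub_zero]

theorem PosSemidef.tendsto_exp_smul_neg {A : Matrix ι ι ℝ} (hA : A.PosSemidef) {v : ι → ℝ}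
    (hker : LinearMap.ker A.mulVecLin = Submodule.span ℝ {v}) :
    Tendsto (fun t : ℝ => exp (t • -A)) atTop (𝓝 ((v ⬝ᵥ v)⁻¹ • vecMulVec v v)) := by
  have hlim : Tendsto (fun t : ℝ => exp (t • -A)) atTop
      (𝓝 (cfc (fun x : ℝ => 1 - x * x⁻¹) A)) := by
    simp only [hA.isHermitian.exp_smul_neg_eq_cfc]
    exact hA.isHermitian.tendsto_cfc_fun fun k =>
      Real.tendsto_exp_neg_mul_atTop (hA.eigenvalues_nonneg k)
  have hv : A *ᵥ v = 0 := by
    rw [← mulVecLin_apply, ← LinearMap.mem_ker, hker]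
    exact Submodule.mem_span_singleton_self v
  rwa [eq_inv_dotProduct_smul_vecMulVec_of_ker_eq_span hker
    (hA.isHermitian.mul_cfc_one_sub_mul_inv) (transpose_cfc _ A)
    (hA.isHermitian.cfc_one_sub_mul_inv_mulVec hv)] at hlim

open scoped MatrixOrder in
theorem PosDef.tendsto_exp_smul_neg_inv_mul_mul_inv {M L : Matrix ι ι ℝ} (hM : M.PosDef)
    (hL : L.PosSemidef) {v : ι → ℝ} (hker : LinearMap.ker L.mulVecLin = Submodule.span ℝ {v}) :
    Tendsto (fun t : ℝ => exp (t • -(M⁻¹ * L)) * M⁻¹) atTop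
      (𝓝 ((v ⬝ᵥ M *ᵥ v)⁻¹ • vecMulVec v v)) := by
  obtain ⟨B, rfl⟩ := CStarAlgebra.nonneg_iff_eq_star_mul_self.mp hM.posSemidef.nonneg
  rw [star_eq_conjTranspose, conjTranspose_eq_transpose_of_trivial] at hM ⊢
  have hB : IsUnit B.det := (isUnit_iff_isUnit_det B).mp (isUnit_of_mul_isUnit_right hM.isUnit)
  have hBinv : B⁻¹ *ᵥ (B *ᵥ v) = v := by rw [mulVec_mulVec, nonsing_inv_mul B hB, one_mulVec]
  have hA : (B⁻¹ᵀ * L * B⁻¹).PosSemidef := by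
    simpa using hL.conjTranspose_mul_mul_same B⁻¹
  have hkerA : LinearMap.ker (B⁻¹ᵀ * L * B⁻¹).mulVecLin = Submodule.span ℝ {B *ᵥ v} := by
    rw [hL.ker_transpose_mul_mul_same, hker]
    conv_lhs => rw [← hBinv]
    exact Submodule.comap_span_singleton_of_injective (f := B⁻¹.mulVecLin)
      (mulVec_injective_of_isUnit ((isUnit_iff_isUnit_det _).mpr (isUnit_nonsing_inv_det B hB))) _
  have hexp : ∀ t : ℝ, exp (t • -((Bᵀ * B)⁻¹ * L)) * (Bᵀ * B)⁻¹ =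
      B⁻¹ * exp (t • -(B⁻¹ᵀ * L * B⁻¹)) * B⁻¹ᵀ := by
    intro t
    have hconj : t • -((Bᵀ * B)⁻¹ * L) = B⁻¹ * (t • -(B⁻¹ᵀ * L * B⁻¹)) * B := by
      rw [mul_inv_rev, transpose_nonsing_inv]
      simp only [Matrix.mul_smul, Matrix.smul_mul, Matrix.mul_neg, Matrix.neg_mul,
        Matrix.mul_assoc, nonsing_inv_mul B hB, Matrix.mul_one]
    rw [hconj, exp_conj' B _ ((isUnit_iff_isUnit_det B).mpr hB), mul_inv_rev, transpose_nonsing_inv]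
    simp only [Matrix.mul_assoc, mul_nonsing_inv_cancel_left _ _ hB]
  simp only [hexp]
  convert (hA.tendsto_exp_smul_neg hkerA).const_matrix_mul_mul_const B⁻¹ B⁻¹ᵀ using 2
  rw [mul_smul_vecMulVec_mul_transpose, hBinv, ← Matrix.mul_one Bᵀ,
    dotProduct_transpose_mul_mul_mulVec]
  simp

end

theorem PosDef.tendsto_reduced_exp_smul_neg_inv_mul_mul_inv [Fintype κ] [DecidableEq κ]
    {M L : Matrix ι ι ℝ} (hM : M.PosDef) (hL : L.PosSemidef) {v : ι → ℝ}
    (hker : LinearMap.ker L.mulVecLin = Submodule.span ℝ {v}) {P : Matrix ι κ ℝ}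
    (hP : Function.Injective P.mulVec) {w : κ → ℝ} (hPw : P *ᵥ w = v) :
    Tendsto (fun t : ℝ =>
        P * (exp (t • -((Pᵀ * M * P)⁻¹ * (Pᵀ * L * P))) * (Pᵀ * M * P)⁻¹) * Pᵀ) atTop
      (𝓝 ((v ⬝ᵥ M *ᵥ v)⁻¹ • vecMulVec v v)) := by
  have hMred : (Pᵀ * M * P).PosDef := by simpa using hM.conjTranspose_mul_mul_same hP
  have hLred : (Pᵀ * L * P).PosSemidef := by simpa using hL.conjTranspose_mul_mul_same P
  have hkerred : LinearMap.ker (Pᵀ * L * P).mulVecLin = Submodule.span ℝ {w} := by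
    rw [hL.ker_transpose_mul_mul_same, hker, ← hPw]
    exact Submodule.comap_span_singleton_of_injective (f := P.mulVecLin) hP w
  convert (hMred.tendsto_exp_smul_neg_inv_mul_mul_inv hLred hkerred).const_matrix_mul_mul_const
    P Pᵀ using 2
  rw [mul_smul_vecMulVec_mul_transpose, dotProduct_transpose_mul_mul_mulVec, hPw]

end Matrix

section Partition

variable {ι κ : Type*} [DecidableEq ι] [Fintype κ] {C : κ → Finset ι} {P : Matrix ι κ ℝ}

lemma mulVec_apply_of_mem_cluster (hP : ∀ i j, P i j = if i ∈ C j then 1 else 0)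
    (hdisj : ∀ j k, j ≠ k → Disjoint (C j) (C k)) {i : ι} {j : κ} (hij : i ∈ C j)
    (x : κ → ℝ) : (P *ᵥ x) i = x j := by
  rw [mulVec, dotProduct, Finset.sum_eq_single j]
  · simp [hP, hij]
  · intro k _ hkj
    simp [hP, Finset.disjoint_left.mp (hdisj j k hkj.symm) hij]
  · simp

lemma mulVec_injective_of_cluster (hP : ∀ i j, P i j = if i ∈ C j then 1 else 0)
    (hdisj : ∀ j k, j ≠ k → Disjoint (C j) (C k)) (hne : ∀ j, (C j).Nonempty) :
    Function.Injective P.mulVec := fun x y hxy => funext fun j => by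
  obtain ⟨i, hij⟩ := hne j
  rw [← mulVec_apply_of_mem_cluster hP hdisj hij x, hxy, mulVec_apply_of_mem_cluster hP hdisj hij]

end Partition

/-- For the single-integrator network `Mẋ = −Lx + Fu`, `y = Hx` and its clustered
reduction via a partition characteristic matrix `Π`, the impulse responses
`y(t) = H e^{−M⁻¹Lt} M⁻¹ F` and `ŷ(t) = Ĥ e^{−M̂⁻¹L̂t} M̂⁻¹ F̂` both converge as
`t → ∞` to `H 𝟙_n 𝟙_nᵀ F / (𝟙_nᵀ M 𝟙_n)`. -/
theorem clustered_impulse_response_limit {n r p q : ℕ}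
    (m : Fin n → ℝ) (hm : ∀ i, 0 < m i)
    (L : Matrix (Fin n) (Fin n) ℝ)
    (hLpsd : L.PosSemidef)
    (hLker : LinearMap.ker L.mulVecLin = Submodule.span ℝ {fun _ => (1 : ℝ)})
    (F : Matrix (Fin n) (Fin p) ℝ) (H : Matrix (Fin q) (Fin n) ℝ)
    (C : Fin r → Finset (Fin n))
    (hne : ∀ j, (C j).Nonempty)
    (hdisj : ∀ j k, j ≠ k → Disjoint (C j) (C k))
    (hcover : ∀ i : Fin n, ∃ j, i ∈ C j)
    (Pi : Matrix (Fin n) (Fin r) ℝ)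
    (hPi : ∀ i j, Pi i j = if i ∈ C j then 1 else 0)
    (M : Matrix (Fin n) (Fin n) ℝ) (hM : M = Matrix.diagonal m) :
    Tendsto (fun t : ℝ => H * exp (t • (-(M⁻¹ * L))) * M⁻¹ * F) atTop
      (nhds ((dotProduct (fun _ => (1 : ℝ)) (M.mulVec fun _ => (1 : ℝ)))⁻¹ •
        (H * (Matrix.of fun _ _ => (1 : ℝ) : Matrix (Fin n) (Fin n) ℝ) * F))) ∧
    Tendsto (fun t : ℝ =>
        (H * Pi) * exp (t • (-((Piᵀ * M * Pi)⁻¹ * (Piᵀ * L * Pi)))) *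
          (Piᵀ * M * Pi)⁻¹ * (Piᵀ * F)) atTop
      (nhds ((dotProduct (fun _ => (1 : ℝ)) (M.mulVec fun _ => (1 : ℝ)))⁻¹ •
        (H * (Matrix.of fun _ _ => (1 : ℝ) : Matrix (Fin n) (Fin n) ℝ) * F))) := by
  have hMpd : M.PosDef := hM ▸ posDef_diagonal_iff.mpr hm
  have hPi1 : Pi *ᵥ (fun _ => 1) = fun _ => 1 := funext fun i => by
    obtain ⟨j, hij⟩ := hcover i
    exact mulVec_apply_of_mem_cluster hPi hdisj hij _
  have hJ : (of fun _ _ => 1 : Matrix (Fin n) (Fin n) ℝ) =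
      vecMulVec (fun _ => 1) (fun _ => 1) := by
    ext; simp [vecMulVec_apply]
  rw [hJ, ← Matrix.smul_mul, ← Matrix.mul_smul]
  constructor
  · convert (hMpd.tendsto_exp_smul_neg_inv_mul_mul_inv hLpsd hLker).const_matrix_mul_mul_const
      H F using 2
    simp only [Matrix.mul_assoc]
  · convert ((hMpd.tendsto_reduced_exp_smul_neg_inv_mul_mul_inv hLpsd hLker
      (mulVec_injective_of_cluster hPi hdisj hne) hPi1).const_matrix_mul_mul_const H F) using 2
    simp only [Matrix.mul_assoc]
end

section
/- The networked system (I_n⊗I)ẋ = (I_n⊗A − L⊗BC)x achieves synchronization (i.e., x_i(t) − x_j(t) → 0 for all i,j and all initial conditions) if and only if A − λ_k BC is Hurwitz for every nonzero eigenvalue λ_k of L, where L is a connected undirected graph Laplacian. -/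
/-!
Write a state as `vec X`, where the columns of `X` are the agents, so that the network matrix
`I ⊗ A - L ⊗ N` (here `N = BC`) acts as `X ↦ A X - N X Lᵀ`. On a rank-one state `z uᵀ` with
`L u = λ u` it acts as `z ↦ (A - λ N) z`, hence so does its exponential. Expanding an initial state
along an eigenbasis of the symmetric matrix `L`, the mode of the eigenvalue `0` has a constant `u`
and never contributes to a disagreement `x_i - x_j`, while every other mode decays as soon as
`A - λ N` is Hurwitz: on a generalized eigenvector of eigenvalue `μ` the flow is `e^{tμ}` times a
polynomial in `t`.

Conversely, if `A - λ N` has an eigenvalue `μ` with `Re μ ≥ 0` and eigenvector `v`, pick an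
eigenvector `w` of `L` for `λ ≠ 0`; it is not constant because `L 𝟙 = 0`. The complex solution
`e^{tμ} v wᵀ` keeps the disagreement `e^{tμ} v_k (w_i - w_j)` away from zero, so its real or its
imaginary part is a real solution that does not synchronize.
-/

open Matrix Filter NormedSpace Kronecker Topology
open scoped Nat

theorem tendsto_pow_mul_exp_mul_of_re_neg (j : ℕ) {μ : ℂ} (hμ : μ.re < 0) :
    Tendsto (fun t : ℝ => (t : ℂ) ^ j * exp ((t : ℂ) * μ)) atTop (𝓝 0) := by
  refine squeeze_zero_norm' ?_
    (tendsto_rpow_mul_exp_neg_mul_atTop_nhds_zero j (-μ.re) (neg_pos.2 hμ))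
  filter_upwards [eventually_ge_atTop 0] with t ht
  rw [norm_mul, norm_pow, ← Complex.exp_eq_exp_ℂ, Complex.norm_exp, Real.rpow_natCast]
  simp [abs_of_nonneg ht, mul_comm]

theorem not_tendsto_exp_mul_mul_of_re_nonneg {μ c : ℂ} (hμ : 0 ≤ μ.re) (hc : c ≠ 0) :
    ¬Tendsto (fun t : ℝ => exp ((t : ℂ) * μ) * c) atTop (𝓝 0) := by
  intro h
  have hlower : ∀ᶠ t : ℝ in atTop, ‖c‖ ≤ ‖exp ((t : ℂ) * μ) * c‖ := by
    filter_upwards [eventually_ge_atTop 0] with t ht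
    rw [norm_mul, ← Complex.exp_eq_exp_ℂ, Complex.norm_exp]
    refine le_mul_of_one_le_left (norm_nonneg c) (Real.one_le_exp ?_)
    simpa using mul_nonneg ht hμ
  exact (norm_pos_iff.2 hc).not_ge (by simpa using ge_of_tendsto h.norm hlower)

theorem Module.Basis.sum_vecMulVec_repr {R α ι : Type*} [CommRing R] [Fintype α]
    (b : Module.Basis α R (α → R)) (X : Matrix ι α R) :
    ∑ p, vecMulVec (fun k => b.repr (X k) p) (b p) = X := by
  ext k i
  simpa [Matrix.sum_apply, vecMulVec_apply] using congrFun (b.sum_repr (X k)) i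

namespace Matrix

theorem kronecker_mulVec_vec_vecMulVec {R α β ι κ : Type*} [CommRing R] [Fintype β] [Fintype κ]
    (X : Matrix α β R) (Y : Matrix ι κ R) (z : κ → R) (u : β → R) :
    (X ⊗ₖ Y) *ᵥ vec (vecMulVec z u) = vec (vecMulVec (Y *ᵥ z) (X *ᵥ u)) := by
  rw [kronecker_mulVec_vec, mul_vecMulVec, vecMulVec_mul, vecMul_transpose]

theorem map_ofReal_mulVec {ι κ : Type*} [Fintype κ] (X : Matrix ι κ ℝ) (z : κ → ℂ) :
    X.map Complex.ofReal *ᵥ z = fun p =>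
      ((X *ᵥ fun q => (z q).re) p : ℂ) + Complex.I * ((X *ᵥ fun q => (z q).im) p : ℂ) := by
  funext p
  simp only [mulVec, dotProduct, map_apply, Complex.ofReal_sum, Complex.ofReal_mul, Finset.mul_sum,
    ← Finset.sum_add_distrib]
  refine Finset.sum_congr rfl fun q _ => ?_
  conv_lhs => rw [← Complex.re_add_im (z q)]
  ring

def networkMatrix {R α ι : Type*} [CommRing R] [DecidableEq α] (A N : Matrix ι ι R)
    (L : Matrix α α R) : Matrix (α × ι) (α × ι) R :=
  1 ⊗ₖ A - L ⊗ₖ N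

theorem networkMatrix_mulVec_vec_vecMulVec {R α ι : Type*} [CommRing R] [Fintype α]
    [DecidableEq α] [Fintype ι] (A N : Matrix ι ι R) {L : Matrix α α R} {u : α → R} {lam : R}
    (hu : L *ᵥ u = lam • u) (z : ι → R) :
    networkMatrix A N L *ᵥ vec (vecMulVec z u) = vec (vecMulVec ((A - lam • N) *ᵥ z) u) := by
  rw [networkMatrix, sub_mulVec, kronecker_mulVec_vec_vecMulVec, kronecker_mulVec_vec_vecMulVec,
    one_mulVec, hu, vecMulVec_smul, ← smul_vecMulVec, ← vec_sub, ← sub_vecMulVec, sub_mulVec,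
    smul_mulVec]

theorem networkMatrix_map {R S α ι : Type*} [CommRing R] [CommRing S] [DecidableEq α]
    (f : R →+* S) (A N : Matrix ι ι R) (L : Matrix α α R) :
    (networkMatrix A N L).map f = networkMatrix (A.map f) (N.map f) (L.map f) := by
  ext ⟨i, k⟩ ⟨j, l⟩
  by_cases hij : i = j <;> simp [networkMatrix, hij]

theorem exists_apply_ne_of_mulVec_eq_smul {K α : Type*} [Field K] [Fintype α] {L : Matrix α α K}
    (hone : L *ᵥ (fun _ => 1) = 0) {w : α → K} {lam : K} (hw : L *ᵥ w = lam • w) (hlam : lam ≠ 0)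
    (hw0 : w ≠ 0) : ∃ i j, w i ≠ w j := by
  by_contra! hconst
  obtain ⟨i, -⟩ := Function.ne_iff.1 hw0
  have hw_eq : w = w i • fun _ => 1 := funext fun j => by simp [hconst j i]
  rw [hw_eq, mulVec_smul, hone, smul_zero, eq_comm, smul_eq_zero, ← hw_eq] at hw
  exact hw0 (hw.resolve_left hlam)

variable {ι κ : Type*} [Fintype ι] [DecidableEq ι] [Fintype κ] [DecidableEq κ]

theorem exists_mulVec_eq_smul_of_mem_spectrum {K : Type*} [Field K] {M : Matrix ι ι K} {μ : K}
    (hμ : μ ∈ spectrum K M) : ∃ v ≠ 0, M *ᵥ v = μ • v := by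
  rw [← spectrum_toLin', ← Module.End.hasEigenvalue_iff_mem_spectrum] at hμ
  obtain ⟨v, hv⟩ := hμ.exists_hasEigenvector
  exact ⟨v, hv.2, by simpa using hv.apply_eq_smul⟩

section Exp

variable {𝕂 : Type*} [RCLike 𝕂]

theorem hasSum_exp_mulVec (M : Matrix ι ι 𝕂) (v : ι → 𝕂) :
    HasSum (fun k : ℕ => (k !⁻¹ : 𝕂) • (M ^ k *ᵥ v)) (exp M *ᵥ v) := by
  open scoped Matrix.Norms.Operator in
  convert (exp_series_hasSum_exp' (𝕂 := 𝕂) M).map ((mulVecBilin 𝕂 𝕂).flip v)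
    (continuous_id.matrix_mulVec continuous_const) using 1
  · funext k
    simp
  -- the operator norm induces the product topology, so the two `exp`s agree definitionally
  · rfl

theorem exp_mulVec_map_of_mulVec_map (f : (κ → 𝕂) →ₗ[𝕂] (ι → 𝕂)) {M : Matrix ι ι 𝕂}
    {N : Matrix κ κ 𝕂} (h : ∀ z, M *ᵥ f z = f (N *ᵥ z)) (z : κ → 𝕂) :
    exp M *ᵥ f z = f (exp N *ᵥ z) := by
  have hpow : ∀ k z, M ^ k *ᵥ f z = f (N ^ k *ᵥ z) := by
    intro k
    induction k with
    | zero => simp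
    | succ k ih => intro z; rw [pow_succ', ← mulVec_mulVec, ih, h, mulVec_mulVec, ← pow_succ']
  refine (hasSum_exp_mulVec M (f z)).unique ?_
  simpa [Function.comp_def, hpow] using
    (hasSum_exp_mulVec N z).map f (LinearMap.continuous_of_finiteDimensional f)

theorem exp_smul_one (a : 𝕂) : exp (a • (1 : Matrix ι ι 𝕂)) = exp a • 1 := by
  open scoped Matrix.Norms.Operator in
  rw [← Algebra.algebraMap_eq_smul_one, ← Algebra.algebraMap_eq_smul_one]
  exact (algebraMap_exp_comm a).symm

theorem exp_smul_mulVec_of_pow_mulVec_eq_zero {M : Matrix ι ι 𝕂} {μ : 𝕂} {z : ι → 𝕂} {K : ℕ}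
    (hz : (M - μ • 1) ^ K *ᵥ z = 0) (c : 𝕂) :
    exp (c • M) *ᵥ z =
      exp (c * μ) • ∑ j ∈ Finset.range K, ((j ! : 𝕂)⁻¹ * c ^ j) • ((M - μ • 1) ^ j *ᵥ z) := by
  have hsplit : c • M = (c * μ) • 1 + c • (M - μ • 1) := by module
  have hcomm : Commute ((c * μ) • (1 : Matrix ι ι 𝕂)) (c • (M - μ • 1)) :=
    ((Commute.one_left _).smul_right _).smul_left _
  rw [hsplit, exp_add_of_commute _ _ hcomm, exp_smul_one, smul_mul_assoc, one_mul, smul_mulVec]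
  congr 1
  refine ((hasSum_exp_mulVec _ z).unique (hasSum_sum_of_ne_finset_zero fun k hk => ?_)).trans
    (Finset.sum_congr rfl fun j _ => by rw [smul_pow, smul_mulVec, smul_smul])
  rw [Finset.mem_range, not_lt] at hk
  rw [smul_pow, smul_mulVec, ← Nat.sub_add_cancel hk, pow_add (M - μ • 1), ← mulVec_mulVec, hz,
    mulVec_zero, smul_zero, smul_zero]

theorem exp_smul_mulVec_of_mulVec_eq_smul {M : Matrix ι ι 𝕂} {μ : 𝕂} {z : ι → 𝕂}
    (hz : M *ᵥ z = μ • z) (c : 𝕂) : exp (c • M) *ᵥ z = exp (c * μ) • z := by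
  have h1 : (M - μ • 1) ^ 1 *ᵥ z = 0 := by simp [sub_mulVec, hz, smul_mulVec]
  simpa using exp_smul_mulVec_of_pow_mulVec_eq_zero h1 c

end Exp

theorem tendsto_exp_smul_mulVec_of_mem_maxGenEigenspace {M : Matrix ι ι ℂ} {μ : ℂ} {z : ι → ℂ}
    (hz : z ∈ Module.End.maxGenEigenspace (toLin' M) μ) (hμ : μ.re < 0) :
    Tendsto (fun t : ℝ => exp ((t : ℂ) • M) *ᵥ z) atTop (𝓝 0) := by
  obtain ⟨K, hK⟩ := (Module.End.mem_maxGenEigenspace _ _ _).1 hz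
  replace hK : (M - μ • 1) ^ K *ᵥ z = 0 := by
    rwa [← toLinAlgEquiv'_apply, map_pow, map_sub, map_smul, map_one]
  simp_rw [exp_smul_mulVec_of_pow_mulVec_eq_zero hK, Finset.smul_sum, smul_smul]
  rw [← Finset.sum_const_zero (s := Finset.range K)]
  refine tendsto_finsetSum _ fun j _ => ?_
  have := ((tendsto_pow_mul_exp_mul_of_re_neg j hμ).const_mul (j ! : ℂ)⁻¹).smul_const
    ((M - μ • 1) ^ j *ᵥ z)
  rw [mul_zero, zero_smul] at this
  exact this.congr fun t => by ring_nf

theorem tendsto_exp_smul_mulVec_of_re_neg {M : Matrix ι ι ℂ} (hM : ∀ μ ∈ spectrum ℂ M, μ.re < 0)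
    (v : ι → ℂ) : Tendsto (fun t : ℝ => exp ((t : ℂ) • M) *ᵥ v) atTop (𝓝 0) := by
  have hv : v ∈ ⨆ μ, Module.End.maxGenEigenspace (toLin' M) μ := by
    rw [Module.End.iSup_maxGenEigenspace_eq_top]; trivial
  induction hv using Submodule.iSup_induction' with
  | mem μ z hz =>
    obtain rfl | hz0 := eq_or_ne z 0
    · simp
    refine tendsto_exp_smul_mulVec_of_mem_maxGenEigenspace hz (hM μ ?_)
    rw [← spectrum_toLin']
    exact (Module.End.HasUnifEigenvalue.lt (k := ⊤) one_pos
      ((Submodule.ne_bot_iff _).2 ⟨z, hz, hz0⟩)).mem_spectrum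
  | zero => simp
  | add x y _ _ hx hy => simpa [mulVec_add] using hx.add hy

theorem exp_map_ofReal (X : Matrix ι ι ℝ) :
    exp (X.map Complex.ofReal) = (exp X).map Complex.ofReal := by
  open scoped Matrix.Norms.Operator in
  exact (map_exp Complex.ofRealHom.mapMatrix
    (continuous_id.matrix_map Complex.continuous_ofReal) X).symm

theorem exp_smul_map_ofReal_mulVec (M : Matrix ι ι ℝ) (t : ℝ) (z : ι → ℂ) :
    exp ((t : ℂ) • M.map Complex.ofReal) *ᵥ z = fun p =>
      ((exp (t • M) *ᵥ fun q => (z q).re) p : ℂ) +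
        Complex.I * ((exp (t • M) *ᵥ fun q => (z q).im) p : ℂ) := by
  have : (t : ℂ) • M.map Complex.ofReal = (t • M).map Complex.ofReal := by
    ext; simp
  rw [this, exp_map_ofReal, map_ofReal_mulVec]

def IsHurwitz (M : Matrix ι ι ℝ) : Prop :=
  ∀ μ ∈ spectrum ℂ (M.map Complex.ofReal), μ.re < 0

theorem IsHurwitz.tendsto_exp_smul_mulVec {M : Matrix ι ι ℝ} (hM : M.IsHurwitz) (v : ι → ℝ) :
    Tendsto (fun t : ℝ => exp (t • M) *ᵥ v) atTop (𝓝 0) := by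
  have h := tendsto_exp_smul_mulVec_of_re_neg hM fun q => (v q : ℂ)
  simp only [exp_smul_map_ofReal_mulVec, Complex.ofReal_re, Complex.ofReal_im, ← Pi.zero_def,
    mulVec_zero, Pi.zero_apply, Complex.ofReal_zero, mul_zero, add_zero, tendsto_pi_nhds] at h
  exact tendsto_pi_nhds.2 fun p => tendsto_ofReal_iff.1 (h p)

section Network

variable {α : Type*} [Fintype α] [DecidableEq α]

def SynchronizesFrom (M : Matrix (α × ι) (α × ι) ℝ) (x₀ : α × ι → ℝ) : Prop :=
  ∀ i j k, Tendsto (fun t : ℝ => (exp (t • M) *ᵥ x₀) (i, k) - (exp (t • M) *ᵥ x₀) (j, k))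
    atTop (𝓝 0)

def Synchronizes (M : Matrix (α × ι) (α × ι) ℝ) : Prop :=
  ∀ x₀, SynchronizesFrom M x₀

theorem exp_smul_networkMatrix_mulVec_vec_vecMulVec {𝕂 : Type*} [RCLike 𝕂] (A N : Matrix ι ι 𝕂)
    {L : Matrix α α 𝕂} {u : α → 𝕂} {lam : 𝕂} (hu : L *ᵥ u = lam • u) (t : 𝕂) (z : ι → 𝕂) :
    exp (t • networkMatrix A N L) *ᵥ vec (vecMulVec z u) =
      vec (vecMulVec (exp (t • (A - lam • N)) *ᵥ z) u) := by
  let f : (ι → 𝕂) →ₗ[𝕂] (α × ι → 𝕂) :=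
    { toFun := fun z => vec (vecMulVec z u)
      map_add' := fun _ _ => by rw [add_vecMulVec, vec_add]
      map_smul' := fun _ _ => by rw [smul_vecMulVec, vec_smul]; rfl }
  refine exp_mulVec_map_of_mulVec_map f (fun z => ?_) z
  simp only [f, LinearMap.coe_mk, AddHom.coe_mk, smul_mulVec,
    networkMatrix_mulVec_vec_vecMulVec A N hu, smul_vecMulVec, vec_smul]

theorem synchronizesFrom_sum {M : Matrix (α × ι) (α × ι) ℝ} {β : Type*} (s : Finset β)
    {x : β → α × ι → ℝ} (h : ∀ p ∈ s, SynchronizesFrom M (x p)) :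
    SynchronizesFrom M (∑ p ∈ s, x p) := by
  intro i j k
  simpa [mulVec_sum, Finset.sum_apply, Finset.sum_sub_distrib] using
    tendsto_finsetSum s fun p hp => h p hp i j k

theorem synchronizesFrom_vec_vecMulVec {A N : Matrix ι ι ℝ} {L : Matrix α α ℝ}
    (hker : LinearMap.ker L.mulVecLin ≤ Submodule.span ℝ {fun _ => 1}) {u : α → ℝ} {lam : ℝ}
    (hu : L *ᵥ u = lam • u) (hH : lam ≠ 0 → (A - lam • N).IsHurwitz) (z : ι → ℝ) :
    SynchronizesFrom (networkMatrix A N L) (vec (vecMulVec z u)) := by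
  intro i j k
  simp only [exp_smul_networkMatrix_mulVec_vec_vecMulVec A N hu, vec, vecMulVec_apply, ← mul_sub]
  obtain rfl | hlam := eq_or_ne lam 0
  · obtain ⟨c, hc⟩ := Submodule.mem_span_singleton.1 (hker (by simpa using hu))
    simp [← hc]
  · simpa using (tendsto_pi_nhds.1 ((hH hlam).tendsto_exp_smul_mulVec z) k).mul_const (u i - u j)

theorem synchronizes_networkMatrix_of_isHurwitz {A N : Matrix ι ι ℝ} {L : Matrix α α ℝ}
    (hL : L.IsHermitian) (hker : LinearMap.ker L.mulVecLin ≤ Submodule.span ℝ {fun _ => 1})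
    (hH : ∀ lam ∈ spectrum ℝ L, lam ≠ 0 → (A - lam • N).IsHurwitz) :
    Synchronizes (networkMatrix A N L) := by
  intro x₀
  let b := hL.eigenvectorBasis.toBasis.map (WithLp.linearEquiv 2 ℝ (α → ℝ))
  have hb : ∀ p, b p = ⇑(hL.eigenvectorBasis p) := fun p => by simp [b]
  rw [show x₀ = vec (of fun k i => x₀ (i, k)) from rfl,
    ← b.sum_vecMulVec_repr (of fun k i => x₀ (i, k)), vec_sum]
  refine synchronizesFrom_sum _ fun p _ => synchronizesFrom_vec_vecMulVec hker ?_
    (hH _ (hL.eigenvalues_mem_spectrum_real p)) _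
  rw [hb]
  exact hL.mulVec_eigenvectorBasis p

theorem Synchronizes.tendsto_exp_smul_map_ofReal_mulVec_sub {M : Matrix (α × ι) (α × ι) ℝ}
    (hM : Synchronizes M) (z : α × ι → ℂ) (i j : α) (k : ι) :
    Tendsto (fun t : ℝ => (exp ((t : ℂ) • M.map Complex.ofReal) *ᵥ z) (i, k) -
      (exp ((t : ℂ) • M.map Complex.ofReal) *ᵥ z) (j, k)) atTop (𝓝 0) := by
  have hre := tendsto_ofReal_iff.2 (hM (fun q => (z q).re) i j k)
  have him := (tendsto_ofReal_iff.2 (hM (fun q => (z q).im) i j k)).const_mul Complex.I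
  have hsum := hre.add him
  rw [Complex.ofReal_zero, mul_zero, add_zero] at hsum
  refine hsum.congr fun t => ?_
  rw [exp_smul_map_ofReal_mulVec]
  push_cast
  ring

theorem Synchronizes.isHurwitz {A N : Matrix ι ι ℝ} {L : Matrix α α ℝ}
    (hsync : Synchronizes (networkMatrix A N L)) (hone : L *ᵥ (fun _ => 1) = 0) {lam : ℝ}
    (hlam : lam ∈ spectrum ℝ L) (hlam0 : lam ≠ 0) : (A - lam • N).IsHurwitz := by
  intro μ hμ
  by_contra! hre
  obtain ⟨w, hw0, hw⟩ := exists_mulVec_eq_smul_of_mem_spectrum hlam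
  obtain ⟨i, j, hij⟩ := exists_apply_ne_of_mulVec_eq_smul hone hw hlam0 hw0
  obtain ⟨v, hv0, hv⟩ := exists_mulVec_eq_smul_of_mem_spectrum hμ
  obtain ⟨k, hk⟩ := Function.ne_iff.1 hv0
  set wc : α → ℂ := fun q => w q
  have hwc : L.map Complex.ofReal *ᵥ wc = (lam : ℂ) • wc := by
    funext q
    simp [wc, map_ofReal_mulVec, hw, ← Pi.zero_def]
  have hv' : (A.map Complex.ofReal - (lam : ℂ) • N.map Complex.ofReal) *ᵥ v = μ • v := by
    rw [← hv]; congr 1; ext; simp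
  have hMc : (networkMatrix A N L).map Complex.ofReal = networkMatrix (A.map Complex.ofReal)
      (N.map Complex.ofReal) (L.map Complex.ofReal) :=
    networkMatrix_map Complex.ofRealHom A N L
  refine not_tendsto_exp_mul_mul_of_re_nonneg hre (c := v k * (wc i - wc j)) ?_
    ((hsync.tendsto_exp_smul_map_ofReal_mulVec_sub (vec (vecMulVec v wc)) i j k).congr fun t => ?_)
  · simpa [wc, sub_eq_zero] using And.intro hk hij
  · rw [hMc, exp_smul_networkMatrix_mulVec_vec_vecMulVec _ _ hwc,
      exp_smul_mulVec_of_mulVec_eq_smul hv']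
    simp [vec, vecMulVec_apply]
    ring

end Network

end Matrix

/-- The diffusively coupled network `ẋ = (I_n ⊗ A − L ⊗ BC)x` achieves synchronization
(all pairwise differences of agent states tend to zero for every initial condition)
iff `A − λ BC` is Hurwitz for every nonzero eigenvalue `λ` of the connected undirected
graph Laplacian `L`. -/
theorem network_synchronization_iff {n ℓ mm : ℕ}
    (A : Matrix (Fin ℓ) (Fin ℓ) ℝ)
    (B : Matrix (Fin ℓ) (Fin mm) ℝ) (C : Matrix (Fin mm) (Fin ℓ) ℝ)
    (L : Matrix (Fin n) (Fin n) ℝ)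
    (hLpsd : L.PosSemidef)
    (hLker : LinearMap.ker L.mulVecLin = Submodule.span ℝ {fun _ => (1 : ℝ)}) :
    (∀ x0 : Fin n × Fin ℓ → ℝ, ∀ i j : Fin n, ∀ k : Fin ℓ,
      Tendsto (fun t : ℝ =>
          (exp (t • ((1 : Matrix (Fin n) (Fin n) ℝ) ⊗ₖ A - L ⊗ₖ (B * C)))).mulVec x0 (i, k)
        - (exp (t • ((1 : Matrix (Fin n) (Fin n) ℝ) ⊗ₖ A - L ⊗ₖ (B * C)))).mulVec x0 (j, k))
        atTop (nhds 0)) ↔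
    (∀ lam : ℝ, lam ∈ spectrum ℝ L → lam ≠ 0 →
      ∀ μ ∈ spectrum ℂ ((A - lam • (B * C)).map Complex.ofReal), μ.re < 0) := by
  have hone : L *ᵥ (fun _ => 1) = 0 := by
    have h : (fun _ => (1 : ℝ)) ∈ LinearMap.ker L.mulVecLin :=
      hLker ▸ Submodule.mem_span_singleton_self _
    simpa using h
  exact ⟨fun hsync _ hlam hlam0 => Synchronizes.isHurwitz hsync hone hlam hlam0,
    synchronizes_networkMatrix_of_isHurwitz hLpsd.isHermitian hLker.le⟩
end

section
/- Let X > 0 and Y > 0 be symmetric matrices solving the edge-Lyapunov inequalities −L_e X − X L_eᵀ + RᵀFFᵀR ≤ 0 and −L_eᵀ Y − Y L_e + WRᵀFFᵀRW ≤ 0 for a tree edge Laplacian L_e = RᵀRW, and let K > 0 certify passivity of (A,B,C) (AᵀK + KA ≤ 0, Cᵀ = KB). Then P_e := X ⊗ K^{-1} satisfies the generalized controllability Gramian inequality (I⊗A − L_e⊗BC)P_e + P_e(I⊗A − L_e⊗BC)ᵀ + (RᵀF⊗B)(RᵀF⊗B)ᵀ ≤ 0. -/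
/-!
Since `Cᵀ = KB`, the interconnection term `L_e ⊗ BC` sends `X ⊗ K⁻¹` to `L_e X ⊗ BBᵀ`, so the
Gramian expression splits as `X ⊗ (−(AK⁻¹ + K⁻¹Aᵀ)) + (L_e X + X L_eᵀ − RᵀFFᵀR) ⊗ BBᵀ`. The first
factor is the passivity inequality conjugated by `K⁻¹`, the second is the edge-Lyapunov inequality
for `X`, and Kronecker products and sums of positive semidefinite matrices are positive
semidefinite.
-/

open Matrix Kronecker

section Kronecker

variable {R : Type*} [CommRing R] {m n l : Type*}

theorem kronecker_lyapunov_eq [Fintype m] [DecidableEq m] [Fintype l]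
    (L X : Matrix m m R) (A P G M : Matrix l l R) (hGP : G * P = M) (hPG : P * Gᵀ = M) :
    (1 ⊗ₖ A - L ⊗ₖ G) * (X ⊗ₖ P) + (X ⊗ₖ P) * (1 ⊗ₖ A - L ⊗ₖ G)ᵀ
      = X ⊗ₖ (A * P + P * Aᵀ) - (L * X + X * Lᵀ) ⊗ₖ M := by
  rw [transpose_sub, ← kroneckerMap_transpose, ← kroneckerMap_transpose, transpose_one,
    sub_mul, mul_sub, ← mul_kronecker_mul, ← mul_kronecker_mul, ← mul_kronecker_mul,
    ← mul_kronecker_mul, one_mul, mul_one, hGP, hPG, kronecker_add, add_kronecker]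
  abel

theorem kronecker_mul_kronecker_transpose {k : Type*} [Fintype n] [Fintype k]
    (E : Matrix m n R) (B : Matrix l k R) : (E ⊗ₖ B) * (E ⊗ₖ B)ᵀ = (E * Eᵀ) ⊗ₖ (B * Bᵀ) := by
  rw [← kroneckerMap_transpose, mul_kronecker_mul]

end Kronecker

section Passivity

variable {R : Type*} [CommRing R] {l k : Type*} [Fintype l] [DecidableEq l] [Fintype k]
  {K : Matrix l l R} {B : Matrix l k R} {C : Matrix k l R}

theorem mul_mul_inv_eq_of_transpose_eq_mul (hK : IsUnit K.det) (hKsym : Kᵀ = K)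
    (hCB : Cᵀ = K * B) : B * C * K⁻¹ = B * Bᵀ := by
  have hC : C = Bᵀ * K := by rw [← transpose_transpose C, hCB, transpose_mul, hKsym]
  rw [hC, Matrix.mul_assoc, Matrix.mul_assoc, mul_nonsing_inv K hK, Matrix.mul_one]

theorem inv_mul_transpose_eq_of_transpose_eq_mul (hK : IsUnit K.det)
    (hCB : Cᵀ = K * B) : K⁻¹ * (B * C)ᵀ = B * Bᵀ := by
  rw [transpose_mul, hCB, ← Matrix.mul_assoc, ← Matrix.mul_assoc, nonsing_inv_mul K hK,
    Matrix.one_mul]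

end Passivity

theorem posSemidef_neg_dual_lyapunov {l : Type*} [Fintype l] [DecidableEq l]
    {A K : Matrix l l ℝ} (hK : IsUnit K.det) (hKsym : Kᵀ = K)
    (hlyap : (-(Aᵀ * K + K * A)).PosSemidef) : (-(A * K⁻¹ + K⁻¹ * Aᵀ)).PosSemidef := by
  have hconj : K⁻¹ * (-(Aᵀ * K + K * A)) * K⁻¹ = -(A * K⁻¹ + K⁻¹ * Aᵀ) := by
    rw [mul_neg, neg_mul, Matrix.mul_add, Matrix.add_mul, add_comm, ← Matrix.mul_assoc,
      nonsing_inv_mul K hK, Matrix.one_mul, Matrix.mul_assoc, Matrix.mul_assoc,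
      mul_nonsing_inv K hK, Matrix.mul_one]
  have hKinv : (K⁻¹)ᴴ = K⁻¹ := by
    rw [conjTranspose_eq_transpose_of_trivial, transpose_nonsing_inv, hKsym]
  simpa only [hKinv, hconj] using hlyap.conjTranspose_mul_mul_same K⁻¹

theorem edge_gramian_general {m n ℓ mm p : ℕ}
    (R : Matrix (Fin n) (Fin m) ℝ)
    (Le : Matrix (Fin m) (Fin m) ℝ)
    (F : Matrix (Fin n) (Fin p) ℝ)
    (A : Matrix (Fin ℓ) (Fin ℓ) ℝ)
    (B : Matrix (Fin ℓ) (Fin mm) ℝ) (C : Matrix (Fin mm) (Fin ℓ) ℝ)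
    (K : Matrix (Fin ℓ) (Fin ℓ) ℝ)
    (hK : K.PosDef)
    (hlyap : (-(Aᵀ * K + K * A)).PosSemidef)
    (hCB : Cᵀ = K * B)
    (X : Matrix (Fin m) (Fin m) ℝ)
    (hX : X.PosDef)
    (hXineq : (Le * X + X * Leᵀ - Rᵀ * F * Fᵀ * R).PosSemidef) :
    (-(((1 : Matrix (Fin m) (Fin m) ℝ) ⊗ₖ A - Le ⊗ₖ (B * C)) * (X ⊗ₖ K⁻¹)
        + (X ⊗ₖ K⁻¹) * ((1 : Matrix (Fin m) (Fin m) ℝ) ⊗ₖ A - Le ⊗ₖ (B * C))ᵀ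
        + ((Rᵀ * F) ⊗ₖ B) * ((Rᵀ * F) ⊗ₖ B)ᵀ)).PosSemidef := by
  have hKunit : IsUnit K.det := (isUnit_iff_isUnit_det K).mp hK.isUnit
  have hKsym : Kᵀ = K := by
    simpa only [conjTranspose_eq_transpose_of_trivial] using hK.isHermitian.eq
  have hnoise : Rᵀ * F * (Rᵀ * F)ᵀ = Rᵀ * F * Fᵀ * R := by
    rw [transpose_mul, transpose_transpose, Matrix.mul_assoc _ Fᵀ]
  rw [kronecker_lyapunov_eq Le X A K⁻¹ (B * C) (B * Bᵀ)
      (mul_mul_inv_eq_of_transpose_eq_mul hKunit hKsym hCB)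
      (inv_mul_transpose_eq_of_transpose_eq_mul hKunit hCB),
    kronecker_mul_kronecker_transpose, hnoise]
  have hsplit : -(X ⊗ₖ (A * K⁻¹ + K⁻¹ * Aᵀ) - (Le * X + X * Leᵀ) ⊗ₖ (B * Bᵀ)
        + (Rᵀ * F * Fᵀ * R) ⊗ₖ (B * Bᵀ))
      = X ⊗ₖ (-(A * K⁻¹ + K⁻¹ * Aᵀ)) + (Le * X + X * Leᵀ - Rᵀ * F * Fᵀ * R) ⊗ₖ (B * Bᵀ) := by
    ext ⟨i, k⟩ ⟨j, k'⟩
    simp only [Matrix.neg_apply, Matrix.add_apply, Matrix.sub_apply, kroneckerMap_apply]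
    ring
  rw [hsplit]
  exact (hX.posSemidef.kronecker (posSemidef_neg_dual_lyapunov hKunit hKsym hlyap)).add
    (hXineq.kronecker (posSemidef_self_mul_conjTranspose B))

/-- For a tree edge Laplacian `L_e = RᵀRW` and a passive agent `(A,B,C)` certified by
`K`, if `X > 0` solves `−L_e X − X L_eᵀ + RᵀFFᵀR ≤ 0` and `Y > 0` solves
`−L_eᵀY − YL_e + WRᵀFFᵀRW ≤ 0`, then `P_e = X ⊗ K⁻¹` is a generalized controllability
Gramian of the edge system `(I⊗A − L_e⊗BC, RᵀF⊗B)`. -/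
theorem edge_gramian {m n ℓ mm p : ℕ}
    (R : Matrix (Fin n) (Fin m) ℝ) (w : Fin m → ℝ) (hw : ∀ k, 0 < w k)
    (Le : Matrix (Fin m) (Fin m) ℝ)
    (hLe : Le = Rᵀ * R * Matrix.diagonal w)
    (hLeSpec : ∀ μ ∈ spectrum ℂ (Le.map Complex.ofReal), μ.im = 0 ∧ 0 < μ.re)
    (F : Matrix (Fin n) (Fin p) ℝ)
    (A : Matrix (Fin ℓ) (Fin ℓ) ℝ)
    (B : Matrix (Fin ℓ) (Fin mm) ℝ) (C : Matrix (Fin mm) (Fin ℓ) ℝ)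
    (K : Matrix (Fin ℓ) (Fin ℓ) ℝ)
    (hK : K.PosDef) (hKsym : Kᵀ = K)
    (hlyap : (-(Aᵀ * K + K * A)).PosSemidef)
    (hCB : Cᵀ = K * B)
    (X Y : Matrix (Fin m) (Fin m) ℝ)
    (hX : X.PosDef) (hXsym : Xᵀ = X)
    (hY : Y.PosDef) (hYsym : Yᵀ = Y)
    (hXineq : (Le * X + X * Leᵀ - Rᵀ * F * Fᵀ * R).PosSemidef)
    (hYineq : (Leᵀ * Y + Y * Le
        - Matrix.diagonal w * Rᵀ * F * Fᵀ * R * Matrix.diagonal w).PosSemidef) :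
    (-(((1 : Matrix (Fin m) (Fin m) ℝ) ⊗ₖ A - Le ⊗ₖ (B * C)) * (X ⊗ₖ K⁻¹)
        + (X ⊗ₖ K⁻¹) * ((1 : Matrix (Fin m) (Fin m) ℝ) ⊗ₖ A - Le ⊗ₖ (B * C))ᵀ
        + ((Rᵀ * F) ⊗ₖ B) * ((Rᵀ * F) ⊗ₖ B)ᵀ)).PosSemidef :=
  edge_gramian_general R Le F A B C K hK hlyap hCB X hX hXineq
end

section
/- Let X = Xᵀ > 0 and Y = Yᵀ > 0 be real matrices. Then there exists an invertible matrix T such that T X Tᵀ = T^{-ᵀ} Y T^{-1} = Σ is diagonal with positive entries σ_1 ≥ ... ≥ σ_n equal to the square roots of the eigenvalues of XY (simultaneous balancing of a pair of positive definite matrices). -/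
/-!
A congruence `X ↦ P X Pᵀ` with `P X Pᵀ = 1` transforms `Y` into the positive definite
`P⁻ᵀ Y P⁻¹`; an orthogonal change of basis, which keeps `P X Pᵀ = 1`, diagonalizes it as
`diag μ` with `μ` sorted decreasingly. Rescaling by `diag (μ^{1/4})` then turns both
matrices into `diag (√μ)`. Since `X = P⁻¹ P⁻ᵀ`, the product `X Y = P⁻¹ diag μ P` is similar
to `diag μ`, so the `√μᵢ` are the square roots of the eigenvalues of `X Y`.
-/

open Matrix Polynomial

namespace Matrix

section Congruence

variable {ι K : Type*} [Fintype ι] [DecidableEq ι]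

theorem charpoly_mul_eq_of_congr [CommRing K] {X Y P D : Matrix ι ι K} (hP : IsUnit P)
    (hX : P * X * Pᵀ = 1) (hY : (P⁻¹)ᵀ * Y * P⁻¹ = D) : (X * Y).charpoly = D.charpoly := by
  have hPtP : Pᵀ * (P⁻¹)ᵀ = 1 := by
    rw [← transpose_mul, nonsing_inv_mul P ((isUnit_iff_isUnit_det P).mp hP), transpose_one]
  have hconj : P * (X * Y) * P⁻¹ = D :=
    calc P * (X * Y) * P⁻¹ = P * X * (Pᵀ * (P⁻¹)ᵀ) * Y * P⁻¹ := by
          rw [hPtP, Matrix.mul_one]; simp only [Matrix.mul_assoc]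
      _ = P * X * Pᵀ * ((P⁻¹)ᵀ * Y * P⁻¹) := by simp only [Matrix.mul_assoc]
      _ = D := by rw [hX, hY, Matrix.one_mul]
  calc (X * Y).charpoly = (P * (X * Y) * P⁻¹).charpoly := (charpoly_units_conj hP.unit _).symm
    _ = D.charpoly := by rw [hconj]

variable [Field K] {X Y P : Matrix ι ι K}

theorem diagonal_mul_congr_eq (τ : ι → K) {d : ι → K} (hX : P * X * Pᵀ = diagonal d) :
    diagonal τ * P * X * (diagonal τ * P)ᵀ = diagonal (τ * d * τ) := by
  rw [transpose_mul, diagonal_transpose]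
  calc diagonal τ * P * X * (Pᵀ * diagonal τ) = diagonal τ * (P * X * Pᵀ) * diagonal τ := by
        simp only [Matrix.mul_assoc]
    _ = diagonal (τ * d * τ) := by rw [hX, diagonal_mul_diagonal, diagonal_mul_diagonal]; rfl

theorem isUnit_diagonal_mul {τ : ι → K} (hτ : ∀ i, τ i ≠ 0) (hP : IsUnit P) :
    IsUnit (diagonal τ * P) :=
  (isUnit_diagonal.mpr (Pi.isUnit_iff.mpr fun i => (hτ i).isUnit)).mul hP

theorem inv_diagonal_of_ne_zero {τ : ι → K} (hτ : ∀ i, τ i ≠ 0) :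
    (diagonal τ)⁻¹ = diagonal τ⁻¹ :=
  inv_eq_right_inv <| by
    rw [diagonal_mul_diagonal, ← diagonal_one]
    exact congrArg diagonal (funext fun i => mul_inv_cancel₀ (hτ i))

theorem transpose_inv_diagonal_mul_congr_eq {τ μ : ι → K} (hτ : ∀ i, τ i ≠ 0)
    (hY : (P⁻¹)ᵀ * Y * P⁻¹ = diagonal μ) :
    ((diagonal τ * P)⁻¹)ᵀ * Y * (diagonal τ * P)⁻¹ = diagonal (τ⁻¹ * μ * τ⁻¹) := by
  rw [mul_inv_rev, inv_diagonal_of_ne_zero hτ, transpose_mul, diagonal_transpose]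
  calc diagonal τ⁻¹ * (P⁻¹)ᵀ * Y * (P⁻¹ * diagonal τ⁻¹)
      = diagonal τ⁻¹ * ((P⁻¹)ᵀ * Y * P⁻¹) * diagonal τ⁻¹ := by simp only [Matrix.mul_assoc]
    _ = diagonal (τ⁻¹ * μ * τ⁻¹) := by rw [hY, diagonal_mul_diagonal, diagonal_mul_diagonal]; rfl

end Congruence

variable {n : ℕ} {X Y : Matrix (Fin n) (Fin n) ℝ}

theorem PosDef.exists_orthogonal_conj_eq_diagonal_antitone (hX : X.PosDef) :
    ∃ (V : Matrix (Fin n) (Fin n) ℝ) (μ : Fin n → ℝ),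
      Vᵀ * V = 1 ∧ Antitone μ ∧ (∀ i, 0 < μ i) ∧ Vᵀ * X * V = diagonal μ := by
  set U := hX.isHermitian.eigenvectorUnitary
  set ev := hX.isHermitian.eigenvalues
  have hUU : (U : Matrix (Fin n) (Fin n) ℝ)ᵀ * U = 1 := by
    simpa [star_eq_conjTranspose, conjTranspose_eq_transpose_of_trivial] using
      mem_unitaryGroup_iff'.mp U.2
  have hUX : (U : Matrix (Fin n) (Fin n) ℝ)ᵀ * X * U = diagonal ev := by
    have := hX.isHermitian.conjStarAlgAut_star_eigenvectorUnitary
    rwa [Unitary.conjStarAlgAut_star_apply, star_eq_conjTranspose,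
      conjTranspose_eq_transpose_of_trivial] at this
  set e := Tuple.sort (OrderDual.toDual ∘ ev)
  refine ⟨(U : Matrix (Fin n) (Fin n) ℝ).submatrix id e, ev ∘ e, ?_, ?_,
    fun i => hX.eigenvalues_pos _, ?_⟩
  · rw [transpose_submatrix, ← submatrix_mul _ _ _ _ _ Function.bijective_id, hUU,
      submatrix_one_equiv]
  · exact monotone_toDual_comp_iff.mp (Tuple.monotone_sort (OrderDual.toDual ∘ ev))
  · rw [transpose_submatrix, ← submatrix_id_id X, ← submatrix_mul _ _ _ _ _ Function.bijective_id,
      ← submatrix_mul _ _ _ _ _ Function.bijective_id, hUX, submatrix_diagonal_equiv]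

theorem PosDef.exists_isUnit_mul_mul_transpose_eq_one (hX : X.PosDef) :
    ∃ P : Matrix (Fin n) (Fin n) ℝ, IsUnit P ∧ P * X * Pᵀ = 1 := by
  obtain ⟨V, μ, hV, -, hμ, hVX⟩ := hX.exists_orthogonal_conj_eq_diagonal_antitone
  set τ : Fin n → ℝ := fun i => (√(μ i))⁻¹
  have hτ : ∀ i, τ i ≠ 0 := fun i => inv_ne_zero (Real.sqrt_pos.mpr (hμ i)).ne'
  refine ⟨diagonal τ * Vᵀ, isUnit_diagonal_mul hτ (IsUnit.of_mul_eq_one V hV), ?_⟩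
  rw [diagonal_mul_congr_eq τ (by rwa [transpose_transpose]), ← diagonal_one]
  refine congrArg diagonal (funext fun i => ?_)
  simp only [Pi.mul_apply, τ]
  rw [mul_right_comm, ← mul_inv, Real.mul_self_sqrt (hμ i).le, inv_mul_cancel₀ (hμ i).ne']

theorem PosDef.exists_simultaneous_diagonalization (hX : X.PosDef) (hY : Y.PosDef) :
    ∃ (P : Matrix (Fin n) (Fin n) ℝ) (μ : Fin n → ℝ), IsUnit P ∧ Antitone μ ∧ (∀ i, 0 < μ i) ∧
      P * X * Pᵀ = 1 ∧ (P⁻¹)ᵀ * Y * P⁻¹ = diagonal μ := by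
  obtain ⟨P₀, hP₀, hP₀X⟩ := hX.exists_isUnit_mul_mul_transpose_eq_one
  have hY₀ : ((P₀⁻¹)ᵀ * Y * P₀⁻¹).PosDef := by
    rw [← conjTranspose_eq_transpose_of_trivial]
    exact hY.conjTranspose_mul_mul_same
      (mulVec_injective_iff_isUnit.mpr (isUnit_nonsing_inv_iff.mpr hP₀))
  obtain ⟨V, μ, hV, hμ, hμpos, hVY⟩ := hY₀.exists_orthogonal_conj_eq_diagonal_antitone
  refine ⟨Vᵀ * P₀, μ, (IsUnit.of_mul_eq_one V hV).mul hP₀, hμ, hμpos, ?_, ?_⟩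
  · calc Vᵀ * P₀ * X * (Vᵀ * P₀)ᵀ = Vᵀ * (P₀ * X * P₀ᵀ) * V := by
          simp only [transpose_mul, transpose_transpose, Matrix.mul_assoc]
      _ = 1 := by rw [hP₀X, Matrix.mul_one, hV]
  · rw [mul_inv_rev, inv_eq_right_inv hV, transpose_mul, ← hVY]
    simp only [Matrix.mul_assoc]

end Matrix

theorem simultaneous_balancing_general {n : ℕ}
    (X Y : Matrix (Fin n) (Fin n) ℝ)
    (hX : X.PosDef)
    (hY : Y.PosDef) :
    ∃ (T : Matrix (Fin n) (Fin n) ℝ) (σ : Fin n → ℝ),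
      IsUnit T ∧ Antitone σ ∧ (∀ i, 0 < σ i) ∧
      T * X * Tᵀ = Matrix.diagonal σ ∧
      (T⁻¹)ᵀ * Y * T⁻¹ = Matrix.diagonal σ ∧
      (X * Y).charpoly = ∏ i, (Polynomial.X - Polynomial.C (σ i ^ 2)) := by
  obtain ⟨P, μ, hP, hμ, hμpos, hPX, hPY⟩ := hX.exists_simultaneous_diagonalization hY
  set σ : Fin n → ℝ := fun i => √(μ i)
  set τ : Fin n → ℝ := fun i => √(σ i)
  have hσpos : ∀ i, 0 < σ i := fun i => Real.sqrt_pos.mpr (hμpos i)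
  have hσσ : ∀ i, σ i ^ 2 = μ i := fun i => Real.sq_sqrt (hμpos i).le
  have hττ : ∀ i, τ i * τ i = σ i := fun i => Real.mul_self_sqrt (hσpos i).le
  have hτ : ∀ i, τ i ≠ 0 := fun i => (Real.sqrt_pos.mpr (hσpos i)).ne'
  refine ⟨diagonal τ * P, σ, isUnit_diagonal_mul hτ hP, fun i j hij => Real.sqrt_le_sqrt (hμ hij),
    hσpos, ?_, ?_, ?_⟩
  · rw [diagonal_mul_congr_eq τ (hPX.trans diagonal_one.symm)]
    exact congrArg diagonal (funext fun i => by simp only [Pi.mul_apply, mul_one, hττ])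
  · rw [transpose_inv_diagonal_mul_congr_eq hτ hPY]
    refine congrArg diagonal (funext fun i => ?_)
    rw [Pi.mul_apply, Pi.mul_apply, Pi.inv_apply, ← hσσ i, ← hττ i]
    field_simp
  · rw [charpoly_mul_eq_of_congr hP hPX hPY, charpoly_diagonal]
    simp only [hσσ]

/-- Simultaneous balancing of a pair of symmetric positive definite matrices: there is
an invertible `T` with `T X Tᵀ = T⁻ᵀ Y T⁻¹ = Σ = diag(σ₁ ≥ ... ≥ σₙ > 0)`, where the
`σ_i` are the square roots of the eigenvalues of `XY` (with multiplicity). -/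
theorem simultaneous_balancing {n : ℕ}
    (X Y : Matrix (Fin n) (Fin n) ℝ)
    (hX : X.PosDef) (hXsym : Xᵀ = X)
    (hY : Y.PosDef) (hYsym : Yᵀ = Y) :
    ∃ (T : Matrix (Fin n) (Fin n) ℝ) (σ : Fin n → ℝ),
      IsUnit T ∧ Antitone σ ∧ (∀ i, 0 < σ i) ∧
      T * X * Tᵀ = Matrix.diagonal σ ∧
      (T⁻¹)ᵀ * Y * T⁻¹ = Matrix.diagonal σ ∧
      (X * Y).charpoly = ∏ i, (Polynomial.X - Polynomial.C (σ i ^ 2)) :=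
  simultaneous_balancing_general X Y hX hY
end
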